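/- arXiv:1003.4029 — 9 statements merged into one kernel-verified Lean document; each statement's English description precedes it below -/
import Mathlib

section
/- For all real x in [0, pi], (1/2) + (1/2)*cos(x) <= e^{-x^2/8}. -/
/-!
Since `1/2 + (1/2) cos x = cos² (x/2)`, it suffices that `0 ≤ cos (x/2) ≤ e^{-x²/16}`.
From `cos y = 1 - 2 sin² (y/2)` and the cubic bound `sin t ≥ t - t³/6` one gets
`cos y ≤ 1 - y²/4` for `0 ≤ y ≤ 2`, and `1 - s ≤ e^{-s}` finishes.
-/

open Real

lemma sq_le_two_mul_sin_sq {t : ℝ} (ht₀ : 0 ≤ t) (ht₁ : t ≤ 1) :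
    t ^ 2 ≤ 2 * sin t ^ 2 := by
  have ht_sq : t ^ 2 ≤ 1 := by nlinarith
  have hcube_nonneg : 0 ≤ t - t ^ 3 / 6 := by
    have : 0 ≤ t * (6 - t ^ 2) := mul_nonneg ht₀ (by linarith)
    linarith
  have hfactor : 1 ≤ 2 * (1 - t ^ 2 / 6) ^ 2 := by nlinarith
  calc t ^ 2 = t ^ 2 * 1 := (mul_one _).symm
    _ ≤ t ^ 2 * (2 * (1 - t ^ 2 / 6) ^ 2) := mul_le_mul_of_nonneg_left hfactor (sq_nonneg t)
    _ = 2 * (t - t ^ 3 / 6) ^ 2 := by ring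
    _ ≤ 2 * sin t ^ 2 := by gcongr; exact sin_ge_sub_cube ht₀

lemma cos_le_one_sub_sq_div_four {y : ℝ} (hy₀ : 0 ≤ y) (hy₂ : y ≤ 2) :
    cos y ≤ 1 - y ^ 2 / 4 := by
  have hsin := sq_le_two_mul_sin_sq (t := y / 2) (by linarith) (by linarith)
  calc cos y = 1 - 2 * sin (y / 2) ^ 2 := by
        rw [← cos_two_mul_eq_one_sub, mul_div_cancel₀ y two_ne_zero]
    _ ≤ 1 - y ^ 2 / 4 := by linarith

/-- For all real `x ∈ [0, π]`, `1/2 + (1/2)·cos x ≤ e^{-x²/8}`. -/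
theorem half_add_half_cos_le_exp (x : ℝ) (hx : x ∈ Set.Icc 0 Real.pi) :
    1 / 2 + (1 / 2) * Real.cos x ≤ Real.exp (-(x ^ 2) / 8) := by
  obtain ⟨hx₀, hxπ⟩ := hx
  have hcos_nonneg : 0 ≤ cos (x / 2) :=
    cos_nonneg_of_mem_Icc ⟨by linarith [pi_pos], by linarith⟩
  have hcos_le : cos (x / 2) ≤ exp (-(x ^ 2) / 16) :=
    calc cos (x / 2) ≤ 1 - (x / 2) ^ 2 / 4 :=
          cos_le_one_sub_sq_div_four (by linarith) (by linarith [pi_le_four])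
      _ ≤ exp (-(x ^ 2) / 16) := by linarith [add_one_le_exp (-(x ^ 2) / 16)]
  calc 1 / 2 + (1 / 2) * cos x = cos (x / 2) ^ 2 := by
        rw [cos_sq, mul_div_cancel₀ x two_ne_zero]; ring
    _ ≤ exp (-(x ^ 2) / 16) ^ 2 := pow_le_pow_left₀ hcos_nonneg hcos_le 2
    _ = exp (-(x ^ 2) / 8) := by rw [← exp_nat_mul]; ring_nf
end

section
/- Let n be a positive integer, k in [1,n], epsilon > 0, and set m = floor((1/2)*(log2 k - log2 (log2 (1/epsilon)))). If m >= 1 and k >= 2^{2m} (i.e., k >= M^2 where M = 2^m), then the function f : {0,1}^n -> Z/2^m Z defined by f(w) = (sum of the bits of w) mod 2^m is a (k, epsilon)-resilient function, i.e., for every (n,k) oblivious bit-fixing source X, the statistical distance between f(X) and the uniform distribution on Z/2^m Z is at most epsilon. -/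
/-!
Fixing the bits in `L` shifts the bit sum by the constant `c = #{i ∈ L | a i}`, so `f(X) = y`
has `∑_{t ≡ y - c} C(k, t)` preimages among the `2^k` equally likely outcomes. Filtering this
binomial sum with the characters `ψ` of `ZMod N`, `N = 2^m`, gives
`N · ∑_{t ≡ d} C(k, t) - 2^k = ∑_{j ≠ 0} ψ(-j d) (1 + ψ j)^k`.
Since `|1 + e^{iθ}| ≤ 2 exp(-θ²/2π²)` for `|θ| ≤ π`, the `j`-th term has norm at most
`2^k q^{|j|}`, where `q = exp(-2k/N²) ≤ 1/2` and `|j|` is the distance from `j` to `0` in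
`ZMod N`; summing the geometric series bounds the statistical distance by `2q`. The choice of
`m` gives `k ≥ N² log₂(1/ε)`, hence `2q ≤ ε`.
-/

open Finset
open scoped Real

def chooseSumMod (N k : ℕ) (d : ZMod N) : ℕ :=
  ∑ t ∈ range (k + 1), if (t : ZMod N) = d then k.choose t else 0

section BitFixing

variable {n : ℕ} (L : Finset (Fin n)) (a : Fin n → Bool)

lemma card_true_eq_add_of_agree {w : Fin n → Bool} (hw : ∀ i ∈ L, w i = a i) :
    #{i | w i = true} = #{i ∈ L | a i = true} + #{i ∈ Lᶜ | w i = true} := by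
  rw [← union_compl L, filter_union, card_union_of_disjoint
    (disjoint_filter_filter disjoint_compl_right), filter_congr fun i hi => by rw [hw i hi]]

lemma card_filter_agree_eq_card_filter_powerset (p : ℕ → Prop) [DecidablePred p] :
    #{w : Fin n → Bool | (∀ i ∈ L, w i = a i) ∧ p #{i | w i = true}}
      = #{T ∈ Lᶜ.powerset | p (#{i ∈ L | a i = true} + #T)} := by
  let extend (T : Finset (Fin n)) (i : Fin n) : Bool := if i ∈ L then a i else decide (i ∈ T)
  have extend_agree (T : Finset (Fin n)) : ∀ i ∈ L, extend T i = a i := fun i hi => if_pos hi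
  have filter_extend {T : Finset (Fin n)} (hT : T ⊆ Lᶜ) :
      {i ∈ Lᶜ | extend T i = true} = T := by
    ext i
    by_cases hi : i ∈ L
    · simpa [extend, hi] using fun h => absurd (hT h) (by simpa using hi)
    · simp [extend, hi]
  refine card_nbij' (fun w => {i ∈ Lᶜ | w i = true}) extend ?_ ?_ ?_ ?_
  · intro w hw
    simp only [coe_filter, Set.mem_ofPred_eq, mem_univ, true_and] at hw
    simp only [coe_filter, mem_powerset, filter_subset, true_and, Set.mem_ofPred_eq]
    exact card_true_eq_add_of_agree L a hw.1 ▸ hw.2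
  · intro T hT
    simp only [coe_filter, mem_powerset, mem_univ, true_and, Set.mem_ofPred_eq] at hT ⊢
    refine ⟨extend_agree T, ?_⟩
    rw [card_true_eq_add_of_agree L a (extend_agree T), filter_extend hT.1]
    exact hT.2
  · intro w hw
    simp only [coe_filter, mem_univ, true_and, Set.mem_ofPred_eq] at hw
    funext i
    by_cases hi : i ∈ L <;> simp [extend, hi, hw.1]
  · intro T hT
    simp only [coe_filter, mem_powerset, Set.mem_ofPred_eq] at hT
    exact filter_extend hT.1

lemma card_filter_agree_sum_eq_chooseSumMod (N : ℕ) (y : ZMod N) :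
    #{w : Fin n → Bool |
        (∀ i ∈ L, w i = a i) ∧ (∑ i, if w i then (1 : ZMod N) else 0) = y}
      = chooseSumMod N #Lᶜ (y - #{i ∈ L | a i = true}) := by
  simp only [sum_boole]
  rw [card_filter_agree_eq_card_filter_powerset L a (fun t => (t : ZMod N) = y), card_filter,
    sum_powerset_apply_card
      (fun t => if ((#{i ∈ L | a i = true} + t : ℕ) : ZMod N) = y then 1 else 0), chooseSumMod]
  refine sum_congr rfl fun t _ => ?_
  simp only [Nat.cast_add, ← eq_sub_iff_add_eq', smul_eq_mul, mul_ite, mul_one, mul_zero]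

end BitFixing

-- Roots-of-unity filter: `∑ j, ψ (j * x)` is `N` if `x = 0` and `0` otherwise.
lemma natCast_mul_chooseSumMod_eq_sum {R : Type*} [CommRing R] [IsDomain R] {N : ℕ} [NeZero N]
    {ψ : AddChar (ZMod N) R} (hψ : ψ.IsPrimitive) (k : ℕ) (d : ZMod N) :
    (N : R) * chooseSumMod N k d = ∑ j, ψ (-(j * d)) * (1 + ψ j) ^ k := by
  calc (N : R) * chooseSumMod N k d
      = ∑ t ∈ range (k + 1), (k.choose t : R) * ∑ j, ψ (j * (t - d)) := by
        simp only [chooseSumMod, Nat.cast_sum, mul_sum, AddChar.sum_mulShift _ hψ, ZMod.card,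
          sub_eq_zero]
        refine sum_congr rfl fun t _ => ?_
        split_ifs <;> simp [mul_comm]
    _ = ∑ j, ψ (-(j * d)) * (1 + ψ j) ^ k := by
        simp only [mul_sum]
        rw [sum_comm]
        refine sum_congr rfl fun j _ => ?_
        rw [add_comm (1 : R), add_pow, mul_sum]
        refine sum_congr rfl fun t _ => ?_
        rw [one_pow, mul_one, ← AddChar.map_nsmul_eq_pow, mul_sub, sub_eq_neg_add,
          AddChar.map_add_eq_mul, nsmul_eq_mul, mul_comm (t : ZMod N)]
        ring

lemma abs_natCast_mul_chooseSumMod_sub_le {N : ℕ} [NeZero N] {ψ : AddChar (ZMod N) ℂ}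
    (hψ : ψ.IsPrimitive) (k : ℕ) (d : ZMod N) :
    |(N : ℝ) * chooseSumMod N k d - 2 ^ k| ≤ ∑ j ∈ univ.erase 0, ‖1 + ψ j‖ ^ k := by
  have h := natCast_mul_chooseSumMod_eq_sum hψ k d
  rw [← add_sum_erase _ _ (mem_univ 0)] at h
  simp only [zero_mul, neg_zero, AddChar.map_zero_eq_one, one_mul, one_add_one_eq_two] at h
  rw [← Real.norm_eq_abs, ← Complex.norm_real]
  push_cast
  rw [h, add_sub_cancel_left]
  refine (norm_sum_le _ _).trans (sum_le_sum fun j _ => ?_)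
  rw [norm_mul, norm_pow, AddChar.norm_apply, one_mul]

section
open Complex

lemma norm_one_add_exp_mul_I_sq (θ : ℝ) : ‖1 + exp (θ * I)‖ ^ 2 = 2 + 2 * Real.cos θ := by
  rw [exp_mul_I, ← ofReal_cos, ← ofReal_sin, ← add_assoc, ← ofReal_one, ← ofReal_add,
    Complex.sq_norm, normSq_add_mul_I]
  nlinarith [Real.sin_sq_add_cos_sq θ]

lemma norm_one_add_exp_mul_I_le {θ : ℝ} (hθ : |θ| ≤ π) :
    ‖1 + exp (θ * I)‖ ≤ 2 * Real.exp (-θ ^ 2 / (2 * π ^ 2)) := by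
  have hexp : Real.exp (-θ ^ 2 / (2 * π ^ 2)) ^ 2 = Real.exp (-(θ ^ 2 / π ^ 2)) := by
    rw [← Real.exp_nat_mul]; congr 1; field_simp; ring
  have hcos := Real.cos_le_one_sub_mul_cos_sq hθ
  have hlin := Real.add_one_le_exp (-(θ ^ 2 / π ^ 2))
  have hsq : ‖1 + exp (θ * I)‖ ^ 2 ≤ (2 * Real.exp (-θ ^ 2 / (2 * π ^ 2))) ^ 2 := by
    rw [norm_one_add_exp_mul_I_sq, mul_pow, hexp]
    linarith [show 2 / π ^ 2 * θ ^ 2 = 2 * (θ ^ 2 / π ^ 2) by ring]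
  exact (pow_le_pow_iff_left₀ (norm_nonneg _) (by positivity) two_ne_zero).1 hsq

lemma norm_one_add_stdAddChar_le {N : ℕ} [NeZero N] (j : ZMod N) :
    ‖1 + ZMod.stdAddChar j‖ ≤ 2 * Real.exp (-2 * (j.valMinAbs.natAbs : ℝ) ^ 2 / N ^ 2) := by
  have hN : (0 : ℝ) < N := Nat.cast_pos.2 (NeZero.pos N)
  have hj : ZMod.stdAddChar j = exp ((2 * π * j.valMinAbs / N : ℝ) * I) := by
    conv_lhs => rw [← ZMod.coe_valMinAbs j]
    rw [ZMod.stdAddChar_coe]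
    push_cast
    ring_nf
  have hθ : |2 * π * j.valMinAbs / N| ≤ π := by
    obtain ⟨hlo, hhi⟩ := ZMod.valMinAbs_mem_Ioc j
    have hlo' : -(N : ℝ) < j.valMinAbs * 2 := by exact_mod_cast hlo
    have hhi' : (j.valMinAbs : ℝ) * 2 ≤ N := by exact_mod_cast hhi
    rw [abs_le, le_div_iff₀ hN, div_le_iff₀ hN]
    constructor <;> nlinarith [Real.pi_pos]
  rw [hj]
  refine (norm_one_add_exp_mul_I_le hθ).trans_eq ?_
  rw [Nat.cast_natAbs, Int.cast_abs, sq_abs]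
  congr 2
  field_simp

end

lemma norm_one_add_stdAddChar_pow_le {N : ℕ} [NeZero N] (j : ZMod N) (k : ℕ) :
    ‖1 + ZMod.stdAddChar j‖ ^ k
      ≤ 2 ^ k * Real.exp (-2 * (k / N ^ 2)) ^ j.valMinAbs.natAbs := by
  set v := j.valMinAbs.natAbs
  have hv : (v : ℝ) ≤ v ^ 2 := by exact_mod_cast Nat.le_self_pow two_ne_zero v
  have hN : (0 : ℝ) < N ^ 2 := pow_pos (Nat.cast_pos.2 (NeZero.pos N)) 2
  calc ‖1 + ZMod.stdAddChar j‖ ^ k ≤ (2 * Real.exp (-2 * (v : ℝ) ^ 2 / N ^ 2)) ^ k :=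
        pow_le_pow_left₀ (norm_nonneg _) (norm_one_add_stdAddChar_le j) k
    _ = 2 ^ k * Real.exp (k * (-2 * (v : ℝ) ^ 2 / N ^ 2)) := by rw [mul_pow, Real.exp_nat_mul]
    _ ≤ 2 ^ k * Real.exp (v * (-2 * (k / N ^ 2))) := by
        refine mul_le_mul_of_nonneg_left (Real.exp_le_exp.2 ?_) (by positivity)
        rw [mul_div_assoc', mul_div_assoc', ← mul_div_assoc, div_le_div_iff_of_pos_right hN]
        nlinarith [(Nat.cast_nonneg k : (0 : ℝ) ≤ k)]
    _ = 2 ^ k * Real.exp (-2 * (k / N ^ 2)) ^ v := by rw [Real.exp_nat_mul]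

lemma sum_erase_zero_val_eq_sum_Ico {M : Type*} [AddCommMonoid M] {N : ℕ} [NeZero N]
    (f : ℕ → M) : ∑ j ∈ univ.erase (0 : ZMod N), f j.val = ∑ t ∈ Ico 1 N, f t := by
  refine sum_nbij' ZMod.val (fun t => t) (fun j hj => ?_) (fun t ht => ?_) (fun j _ => ?_)
    (fun t ht => ?_) (fun _ _ => rfl)
  · simp only [mem_erase, mem_univ, and_true, ← ZMod.val_ne_zero] at hj
    simpa [mem_Ico] using ⟨Nat.one_le_iff_ne_zero.2 hj, ZMod.val_lt j⟩
  · rw [mem_Ico] at ht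
    simp only [mem_erase, mem_univ, and_true, ne_eq, ZMod.natCast_eq_zero_iff]
    exact Nat.not_dvd_of_pos_of_lt ht.1 ht.2
  · exact ZMod.natCast_zmod_val j
  · rw [mem_Ico] at ht
    exact ZMod.val_natCast_of_lt ht.2

lemma sum_erase_zero_pow_natAbs_valMinAbs_le {N : ℕ} [NeZero N] {q : ℝ} (hq0 : 0 ≤ q)
    (hq : q ≤ 1 / 2) : ∑ j ∈ univ.erase (0 : ZMod N), q ^ j.valMinAbs.natAbs ≤ 4 * q := by
  have hmin (j : ZMod N) : q ^ j.valMinAbs.natAbs ≤ q ^ j.val + q ^ (N - j.val) := by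
    rw [ZMod.valMinAbs_natAbs_eq_min]
    rcases min_cases j.val (N - j.val) with ⟨h, _⟩ | ⟨h, _⟩ <;> rw [h]
    · exact le_add_of_nonneg_right (by positivity)
    · exact le_add_of_nonneg_left (by positivity)
  calc ∑ j ∈ univ.erase (0 : ZMod N), q ^ j.valMinAbs.natAbs
      ≤ ∑ t ∈ Ico 1 N, (q ^ t + q ^ (N - t)) :=
        (sum_le_sum fun j _ => hmin j).trans_eq
          (sum_erase_zero_val_eq_sum_Ico fun t => q ^ t + q ^ (N - t))
    _ = 2 * ∑ t ∈ Ico 1 N, q ^ t := by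
        rw [sum_add_distrib, sum_Ico_reflect _ _ le_self_add, add_tsub_cancel_left,
          Nat.add_sub_cancel, two_mul]
    _ ≤ 2 * (q ^ 1 / (1 - q)) := by
        gcongr
        exact geom_sum_Ico_le_of_lt_one hq0 (by linarith)
    _ ≤ 4 * q := by
        rw [pow_one, mul_div_assoc', div_le_iff₀ (by linarith)]
        nlinarith

lemma two_mul_exp_neg_two_mul_le {r ε : ℝ} (hε : 0 < ε) (hr : 1 ≤ r)
    (hεr : Real.logb 2 (1 / ε) ≤ r) : 2 * Real.exp (-2 * r) ≤ ε := by
  have hlog2 : 0 < Real.log 2 := Real.log_pos one_lt_two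
  rw [one_div, Real.logb_inv, Real.logb, neg_le, le_div_iff₀ hlog2] at hεr
  rw [← Real.log_le_log_iff (by positivity) hε, Real.log_mul two_ne_zero (Real.exp_pos _).ne',
    Real.log_exp]
  nlinarith [Real.log_two_lt_d9]

lemma abs_chooseSumMod_div_sub_le {N k : ℕ} [NeZero N] (hr : 1 ≤ (k : ℝ) / N ^ 2)
    (d : ZMod N) :
    |(chooseSumMod N k d : ℝ) / 2 ^ k - 1 / N| ≤ 4 * Real.exp (-2 * (k / N ^ 2)) / N := by
  have hq : Real.exp (-2 * (k / N ^ 2)) ≤ 1 / 2 := by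
    linarith [two_mul_exp_neg_two_mul_le one_pos hr (by rw [div_one, Real.logb_one]; positivity)]
  have hdev : |(N : ℝ) * chooseSumMod N k d - 2 ^ k|
      ≤ 2 ^ k * (4 * Real.exp (-2 * (k / N ^ 2))) := calc
    _ ≤ ∑ j ∈ univ.erase 0, ‖1 + ZMod.stdAddChar j‖ ^ k :=
        abs_natCast_mul_chooseSumMod_sub_le (ZMod.isPrimitive_stdAddChar N) k d
    _ ≤ ∑ j ∈ univ.erase (0 : ZMod N),
          2 ^ k * Real.exp (-2 * (k / N ^ 2)) ^ j.valMinAbs.natAbs :=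
        sum_le_sum fun j _ => norm_one_add_stdAddChar_pow_le j k
    _ ≤ 2 ^ k * (4 * Real.exp (-2 * (k / N ^ 2))) := by
        rw [← mul_sum]
        gcongr
        exact sum_erase_zero_pow_natAbs_valMinAbs_le (Real.exp_pos _).le hq
  have hN : (0 : ℝ) < N := Nat.cast_pos.2 (NeZero.pos N)
  have hpos : (0 : ℝ) < N * 2 ^ k := by positivity
  rw [show (chooseSumMod N k d : ℝ) / 2 ^ k - 1 / N
      = (N * chooseSumMod N k d - 2 ^ k) / (N * 2 ^ k) by field_simp,
    abs_div, abs_of_pos hpos, div_le_div_iff₀ hpos hN]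
  nlinarith

lemma logb_inv_le_div_of_eq_floor {k m : ℕ} {ε : ℝ} (hk : 0 < k)
    (hm : (m : ℤ) = ⌊(1 / 2 : ℝ) * (Real.logb 2 k - Real.logb 2 (Real.logb 2 (1 / ε)))⌋) :
    Real.logb 2 (1 / ε) ≤ k / (2 ^ m) ^ 2 := by
  rcases le_or_gt (Real.logb 2 (1 / ε)) 0 with hL | hL
  · exact hL.trans (by positivity)
  have hfloor : (m : ℝ) ≤ 1 / 2 * (Real.logb 2 k - Real.logb 2 (Real.logb 2 (1 / ε))) := by
    exact_mod_cast hm ▸ Int.floor_le _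
  rw [le_div_iff₀ (by positivity), mul_comm, ← Real.logb_le_logb one_lt_two (by positivity)
    (by exact_mod_cast hk), Real.logb_mul (by positivity) hL.ne', Real.logb_pow,
    Real.logb_pow, Real.logb_self_eq_one one_lt_two]
  push_cast
  linarith

theorem sum_mod_is_resilient_general (n k m : ℕ) (ε : ℝ)
    (hk1 : 1 ≤ k) (hkn : k ≤ n) (hε : 0 < ε)
    (hm : (m : ℤ) = ⌊(1 / 2 : ℝ) * (Real.logb 2 k - Real.logb 2 (Real.logb 2 (1 / ε)))⌋)
    (hkM : 2 ^ (2 * m) ≤ k)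
    (L : Finset (Fin n)) (hL : L.card = n - k) (a : Fin n → Bool) :
    (1 / 2 : ℝ) * ∑ y : ZMod (2 ^ m),
        |((Finset.univ.filter fun w : Fin n → Bool =>
            (∀ i ∈ L, w i = a i) ∧ (∑ i, if w i then (1 : ZMod (2 ^ m)) else 0) = y).card : ℝ)
            / 2 ^ k - 1 / 2 ^ m| ≤ ε := by
  have hfree : #Lᶜ = k := by rw [card_compl, hL, Fintype.card_fin]; omega
  have hr : 1 ≤ (k : ℝ) / (2 ^ m) ^ 2 := by
    rw [one_le_div (by positivity), ← pow_mul, mul_comm]; exact_mod_cast hkM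
  calc (1 / 2 : ℝ) * ∑ y : ZMod (2 ^ m), _
      ≤ 1 / 2 * ∑ _y : ZMod (2 ^ m), 4 * Real.exp (-2 * (k / (2 ^ m) ^ 2)) / 2 ^ m := by
        gcongr with y
        rw [card_filter_agree_sum_eq_chooseSumMod, hfree]
        exact_mod_cast abs_chooseSumMod_div_sub_le (N := 2 ^ m) (by exact_mod_cast hr) _
    _ = 2 * Real.exp (-2 * (k / (2 ^ m) ^ 2)) := by
        rw [sum_const, card_univ, ZMod.card, nsmul_eq_mul]; push_cast; field_simp; ring
    _ ≤ ε := two_mul_exp_neg_two_mul_le hε hr (logb_inv_le_div_of_eq_floor (by omega) hm)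

/-- The sum-of-bits mod `2^m` function is a `(k, ε)`-resilient function when
`m = ⌊(1/2)(log₂ k - log₂ log₂ (1/ε))⌋ ≥ 1` and `k ≥ 2^(2m)`: every `(n,k)`
oblivious bit-fixing source (positions in `L`, `|L| = n-k`, fixed to `a`) is mapped
within statistical distance `ε` of uniform on `ZMod (2^m)`. -/
theorem sum_mod_is_resilient (n k m : ℕ) (ε : ℝ)
    (hn : 1 ≤ n) (hk1 : 1 ≤ k) (hkn : k ≤ n) (hε : 0 < ε)
    (hm : (m : ℤ) = ⌊(1 / 2 : ℝ) * (Real.logb 2 k - Real.logb 2 (Real.logb 2 (1 / ε)))⌋)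
    (hm1 : 1 ≤ m) (hkM : 2 ^ (2 * m) ≤ k)
    (L : Finset (Fin n)) (hL : L.card = n - k) (a : Fin n → Bool) :
    (1 / 2 : ℝ) * ∑ y : ZMod (2 ^ m),
        |((Finset.univ.filter fun w : Fin n → Bool =>
            (∀ i ∈ L, w i = a i) ∧ (∑ i, if w i then (1 : ZMod (2 ^ m)) else 0) = y).card : ℝ)
            / 2 ^ k - 1 / 2 ^ m| ≤ ε :=
  sum_mod_is_resilient_general n k m ε hk1 hkn hε hm hkM L hL a
end

section
/- If X = L^{a,n} is an (n,k) oblivious bit-fixing source and f : {0,1}^n -> {0,1}^m is symmetric in the coordinates outside L, then the support of f(X) has size at most k+1; consequently the statistical distance between f(X) and uniform on {0,1}^m is at least (2^m - (k+1))/2^m. -/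
/-!
Two inputs that agree on `L` and have the same Hamming weight off `L` differ by a permutation
fixing `L` pointwise, so a symmetric `f` agrees on them: on the source, `f` is a function of the
weight of the `k` free bits, which takes `k + 1` values. A distribution supported on `T` exceeds
the uniform one by total mass `1 - |T|/N` on `T` and falls short by `(N - |T|)/N` off `T`; these
add up to `2 (N - |T|)/N`.
-/

open Finset

section PermutationInvariance

variable {α β : Type*} [Fintype α] [DecidableEq α] [DecidableEq β]

theorem exists_perm_fixing_of_card_fibers_eq (L : Finset α) {w w' : α → β}
    (hcount : ∀ b, #{i | i ∉ L ∧ w i = b} = #{i | i ∉ L ∧ w' i = b}) :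
    ∃ π : Equiv.Perm α, (∀ i ∈ L, π i = i) ∧ ∀ i ∉ L, w (π i) = w' i := by
  -- Points of `L` are tagged by themselves, so a fiber-preserving bijection must fix them.
  let tag (v : α → β) (i : α) : α ⊕ β := if i ∈ L then .inl i else .inr (v i)
  have htag_inl (v : α → β) (i j : α) : tag v i = .inl j ↔ i ∈ L ∧ i = j := by
    by_cases hi : i ∈ L <;> simp [tag, hi]
  have htag_inr (v : α → β) (i : α) (b : β) : tag v i = .inr b ↔ i ∉ L ∧ v i = b := by
    by_cases hi : i ∈ L <;> simp [tag, hi]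
  have hfiber (c) : Fintype.card {i // tag w' i = c} = Fintype.card {i // tag w i = c} := by
    rcases c with j | b
    · simp only [Fintype.card_subtype, htag_inl]
    · simp only [Fintype.card_subtype, htag_inr, hcount]
  let π := Equiv.ofFiberEquiv fun c => Fintype.equivOfCardEq (hfiber c)
  have hπ (i) : tag w (π i) = tag w' i := Equiv.ofFiberEquiv_map _ i
  refine ⟨π, fun i hi => ?_, fun i hi => ?_⟩
  · exact ((htag_inl w _ i).1 ((hπ i).trans ((htag_inl w' i i).2 ⟨hi, rfl⟩))).2
  · exact ((htag_inr w _ _).1 ((hπ i).trans ((htag_inr w' i _).2 ⟨hi, rfl⟩))).2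

def freeWeight (L : Finset α) (w : α → Bool) : ℕ := #{i | i ∉ L ∧ w i = true}

theorem card_free_false_add_freeWeight (L : Finset α) (w : α → Bool) :
    #{i | i ∉ L ∧ w i = false} + freeWeight L w = #Lᶜ := by
  rw [freeWeight, add_comm, ← card_filter_add_card_filter_not (s := Lᶜ) (fun i => w i = true)]
  simp only [Bool.not_eq_true]
  congr 2 <;> ext <;> simp

theorem freeWeight_le_card_compl (L : Finset α) (w : α → Bool) : freeWeight L w ≤ #Lᶜ :=
  card_le_card fun _ hi => mem_compl.2 (mem_filter.1 hi).2.1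

theorem apply_eq_of_freeWeight_eq {γ : Type*} {L : Finset α} {f : (α → Bool) → γ}
    (hsym : ∀ π : Equiv.Perm α, (∀ i ∈ L, π i = i) → ∀ w, f (w ∘ π) = f w)
    {w w' : α → Bool} (hL : ∀ i ∈ L, w i = w' i) (hw : freeWeight L w = freeWeight L w') :
    f w = f w' := by
  have hcount : ∀ b, #{i | i ∉ L ∧ w i = b} = #{i | i ∉ L ∧ w' i = b}
    | true => hw
    | false => by
      have := card_free_false_add_freeWeight L w
      have := card_free_false_add_freeWeight L w'
      omega
  obtain ⟨π, hπL, hπ⟩ := exists_perm_fixing_of_card_fibers_eq L hcount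
  have hcomp : w ∘ π = w' := by
    funext i
    by_cases hi : i ∈ L
    · simp only [Function.comp_apply, hπL i hi, hL i hi]
    · exact hπ i hi
  rw [← hsym π hπL w, hcomp]

end PermutationInvariance

theorem Finset.card_image_le_card_image_of_factors {α γ δ : Type*} [DecidableEq γ] [DecidableEq δ]
    {s : Finset α} {f : α → γ} (g : α → δ) (hfg : ∀ x ∈ s, ∀ y ∈ s, g x = g y → f x = f y) :
    #(s.image f) ≤ #(s.image g) := by
  refine card_le_card_of_forall_subsingleton (fun y d => ∃ x ∈ s, f x = y ∧ g x = d) ?_ ?_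
  · simp only [mem_image]
    rintro _ ⟨x, hx, rfl⟩
    exact ⟨g x, ⟨x, hx, rfl⟩, x, hx, rfl, rfl⟩
  · rintro d - _ ⟨-, x, hx, rfl, rfl⟩ _ ⟨-, y, hy, rfl, hxy⟩
    exact hfg x hx y hy hxy.symm

theorem card_filter_forall_mem_eq_pow {α β : Type*} [Fintype α] [DecidableEq α] [Fintype β]
    (L : Finset α) (a : α → β) [DecidablePred fun w : α → β => ∀ i ∈ L, w i = a i] :
    #{w : α → β | ∀ i ∈ L, w i = a i} = Fintype.card β ^ #Lᶜ := by
  let e : {w : α → β // ∀ i ∈ L, w i = a i} ≃ ({i // i ∉ L} → β) :=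
    (Equiv.subtypeEquivRight fun w => by simp [funext_iff]).trans
      (Equiv.subtypePreimage (· ∈ L) fun i => a i)
  rw [← Fintype.card_subtype, Fintype.card_congr e, Fintype.card_fun, Fintype.card_subtype,
    filter_not, filter_mem_eq_inter, univ_inter, compl_eq_univ_sdiff]

theorem le_half_sum_abs_sub_uniform {ι : Type*} [Fintype ι] [DecidableEq ι] {P : ι → ℝ}
    (T : Finset ι) (hP : ∑ y, P y = 1) (hT : ∀ y ∉ T, P y = 0) :
    (Fintype.card ι - #T) / Fintype.card ι ≤ 1 / 2 * ∑ y, |P y - 1 / Fintype.card ι| := by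
  set N : ℝ := (Fintype.card ι : ℝ)
  have hN : 0 < N := by
    have : Nonempty ι := by
      by_contra h
      simp [not_nonempty_iff.1 h] at hP
    exact Nat.cast_pos.2 Fintype.card_pos
  have hsumT : ∑ y ∈ T, P y = 1 := by
    rw [← hP, sum_subset (subset_univ T) fun y _ hy => hT y hy]
  have hin : 1 - #T / N ≤ ∑ y ∈ T, |P y - 1 / N| := calc
    1 - #T / N = ∑ y ∈ T, (P y - 1 / N) := by
      rw [sum_sub_distrib, hsumT, sum_const, nsmul_eq_mul, mul_one_div]
    _ ≤ ∑ y ∈ T, |P y - 1 / N| := sum_le_sum fun y _ => le_abs_self _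
  have hout : ∑ y ∈ Tᶜ, |P y - 1 / N| = (N - #T) / N := by
    rw [sum_congr rfl fun y hy => by rw [hT y (mem_compl.1 hy), zero_sub, abs_neg,
      abs_of_pos (by positivity)], sum_const, card_compl, nsmul_eq_mul,
      Nat.cast_sub (card_le_univ T), mul_one_div]
  rw [← sum_add_sum_compl T, hout]
  have : 1 - #T / N = (N - #T) / N := by field_simp
  linarith

/-- If `f` is symmetric in the coordinates outside `L`, then `f(L^{a,n})` has support
of size at most `k+1`, and hence its statistical distance from uniform on `{0,1}^m`
is at least `(2^m - (k+1))/2^m`. -/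
theorem symmetric_support_small (n k m : ℕ) (hk : k ≤ n)
    (L : Finset (Fin n)) (hL : L.card = n - k)
    (f : (Fin n → Bool) → (Fin m → Bool)) (a : Fin n → Bool)
    (hsym : ∀ π : Equiv.Perm (Fin n), (∀ i ∈ L, π i = i) → ∀ w, f (w ∘ π) = f w) :
    ((Finset.univ.filter fun w : Fin n → Bool => ∀ i ∈ L, w i = a i).image f).card ≤ k + 1 ∧
    ((2 ^ m : ℝ) - (k + 1)) / 2 ^ m ≤
      (1 / 2 : ℝ) * ∑ y : Fin m → Bool,
        |((Finset.univ.filter fun w : Fin n → Bool =>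
            (∀ i ∈ L, w i = a i) ∧ f w = y).card : ℝ) / 2 ^ k - 1 / 2 ^ m| := by
  set s : Finset (Fin n → Bool) := {w | ∀ i ∈ L, w i = a i}
  have hfree : #Lᶜ = k := by rw [card_compl, Fintype.card_fin, hL]; omega
  have hsupp : #(s.image f) ≤ k + 1 := calc
    #(s.image f) ≤ #(s.image (freeWeight L)) :=
      card_image_le_card_image_of_factors _ fun w hw w' hw' =>
        apply_eq_of_freeWeight_eq hsym fun i hi =>
          ((mem_filter.1 hw).2 i hi).trans ((mem_filter.1 hw').2 i hi).symm
    _ ≤ #(range (k + 1)) := card_le_card fun _ hd => by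
        obtain ⟨w, -, rfl⟩ := mem_image.1 hd
        exact mem_range_succ_iff.2 (hfree ▸ freeWeight_le_card_compl L w)
    _ = k + 1 := card_range _
  refine ⟨hsupp, ?_⟩
  have hsum : ∑ y, #{w | (∀ i ∈ L, w i = a i) ∧ f w = y} = 2 ^ k := by
    rw [← Fintype.card_bool, ← hfree, ← card_filter_forall_mem_eq_pow L a,
      card_eq_sum_card_fiberwise fun w _ => mem_univ (f w)]
    simp only [filter_filter]
  have hdist := le_half_sum_abs_sub_uniform (s.image f)
    (P := fun y => (#{w | (∀ i ∈ L, w i = a i) ∧ f w = y} : ℝ) / 2 ^ k) ?_ ?_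
  · simp only [Fintype.card_fun, Fintype.card_bool, Fintype.card_fin, Nat.cast_pow,
      Nat.cast_ofNat] at hdist
    refine le_trans ?_ hdist
    gcongr
    exact_mod_cast hsupp
  · rw [← sum_div, div_eq_one_iff_eq (by positivity)]
    exact_mod_cast hsum
  · intro y hy
    rw [card_eq_zero.2 (filter_eq_empty_iff.2 fun w _ hw =>
      hy (mem_image.2 ⟨w, mem_filter.2 ⟨mem_univ w, hw.1⟩, hw.2⟩)), Nat.cast_zero, zero_div]
end

section
/- Let f : {0,1}^n -> {0,1}^m be computed by a forgetless streaming algorithm with state space V, |V| = S, where each of the n update functions for input bit 0 and bit 1 maps V to V and at least one of the two functions at each step is a bijection. If f is an epsilon-extractor for (n,k) oblivious bit-fixing sources with epsilon < 1, and n/S^k >= k, then 2^m*(1-epsilon) <= k+1. -/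
/-- The state of a streaming algorithm with update functions `σ` and initial state `v0`
after processing input `w`. -/
def streamRun {V : Type} (n : ℕ) (σ : Fin n → Bool → V → V) (v0 : V)
    (w : Fin n → Bool) : V :=
  (List.finRange n).foldl (fun v i => σ i (w i) v) v0

open Function

section Aux

variable {V : Type} {n : ℕ}

/-- default run over a list of positions -/
def drun (σ : Fin n → Bool → V → V) (d : Fin n → Bool) (ℓ : List (Fin n)) (v : V) : V :=
  ℓ.foldl (fun s i => σ i (d i) s) v

lemma drun_cons (σ : Fin n → Bool → V → V) (d : Fin n → Bool) (i : Fin n) (ℓ : List (Fin n))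
    (v : V) : drun σ d (i :: ℓ) v = drun σ d ℓ (σ i (d i) v) := rfl

lemma drun_bij (σ : Fin n → Bool → V → V) (d : Fin n → Bool)
    (hbij : ∀ i, Bijective (σ i (d i))) (ℓ : List (Fin n)) : Bijective (drun σ d ℓ) := by
  induction ℓ with
  | nil => exact bijective_id
  | cons i ℓ ih =>
      have : drun σ d (i :: ℓ) = (drun σ d ℓ) ∘ (σ i (d i)) := rfl
      rw [this]
      exact ih.comp (hbij i)

/-- the deviation map at position `i`, in "final coordinates" -/
noncomputable def gmap [Nonempty V] (σ : Fin n → Bool → V → V) (d : Fin n → Bool) (i : Fin n)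
    (x : V) : V :=
  drun σ d ((List.finRange n).drop ((i : ℕ) + 1))
    (σ i (!d i) (invFun (drun σ d ((List.finRange n).drop (i : ℕ))) x))

lemma pigeon {ι : Type} [Fintype V] [Nonempty V] (g : ι → V → V) (k : ℕ) :
    ∀ (j : ℕ) (A : Finset ι) (z0 : V), k * (Fintype.card V) ^ j ≤ A.card →
    ∃ (B : Finset ι) (zs : ℕ → V), B ⊆ A ∧ k ≤ B.card ∧ zs 0 = z0 ∧
      ∀ i ∈ B, ∀ t < j, g i (zs t) = zs (t + 1) := by
  classical
  intro j
  induction j with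
  | zero =>
      intro A z0 hA
      exact ⟨A, fun _ => z0, le_refl A, by simpa using hA, rfl, fun _ _ t ht => by omega⟩
  | succ j ih =>
      intro A z0 hA
      obtain ⟨v, -, hv⟩ := Finset.exists_le_card_fiber_of_mul_le_card_of_maps_to
        (s := A) (t := (Finset.univ : Finset V)) (f := fun i => g i z0)
        (n := k * Fintype.card V ^ j) (fun a _ => Finset.mem_univ _) Finset.univ_nonempty
        (by
          rw [Finset.card_univ]
          have : Fintype.card V * (k * Fintype.card V ^ j) = k * Fintype.card V ^ (j + 1) := by
            ring
          omega)
      obtain ⟨B, zs', hBA, hBcard, hzs0, hchain⟩ := ih _ v hv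
      refine ⟨B, fun t => match t with | 0 => z0 | t + 1 => zs' t,
        hBA.trans (Finset.filter_subset _ _), hBcard, rfl, ?_⟩
      intro i hi t ht
      match t with
      | 0 =>
          have : g i z0 = v := (Finset.mem_filter.mp (hBA hi)).2
          simpa [hzs0] using this
      | t + 1 => exact hchain i hi t (by omega)

lemma drop_finRange {j : ℕ} (h : j < n) :
    (List.finRange n).drop j = ⟨j, h⟩ :: (List.finRange n).drop (j + 1) := by
  have hlen : j < (List.finRange n).length := by simpa using h
  rw [List.drop_eq_getElem_cons hlen, List.getElem_finRange]
  rfl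

lemma run_eq [Nonempty V] (σ : Fin n → Bool → V → V) (d : Fin n → Bool) (w : Fin n → Bool)
    (B' : Finset (Fin n)) (z : ℕ → V) (k : ℕ)
    (hbij : ∀ i, Bijective (σ i (d i)))
    (hprop : ∀ i ∈ B', ∀ t < k, gmap σ d i (z t) = z (t + 1))
    (hw : ∀ i, i ∉ B' → w i = d i) :
    ∀ (c j : ℕ), n ≤ j + c → ∀ (v : V) (r : ℕ),
      drun σ d ((List.finRange n).drop j) v = z r →
      r + ((List.finRange n).drop j).countP (fun i => w i != d i) ≤ k →
      ((List.finRange n).drop j).foldl (fun s i => σ i (w i) s) v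
        = z (r + ((List.finRange n).drop j).countP (fun i => w i != d i)) := by
  intro c
  induction c with
  | zero =>
      intro j hj v r h1 _
      have hnil : (List.finRange n).drop j = [] :=
        List.drop_eq_nil_of_le (by simpa using hj)
      simpa [hnil, drun] using h1
  | succ c ih =>
      intro j hj v r h1 h2
      by_cases hjn : j < n
      · have hdrop := drop_finRange (n := n) hjn
        by_cases hdev : w ⟨j, hjn⟩ = d ⟨j, hjn⟩
        · have hcnt : ((List.finRange n).drop j).countP (fun i => w i != d i)
              = ((List.finRange n).drop (j + 1)).countP (fun i => w i != d i) := by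
            rw [hdrop, List.countP_cons]; simp [hdev]
          rw [hdrop, drun_cons] at h1
          rw [hcnt] at h2 ⊢
          rw [hdrop, List.foldl_cons, hdev]
          exact ih (j + 1) (by omega) _ r h1 h2
        · have hiB : (⟨j, hjn⟩ : Fin n) ∈ B' := by
            by_contra hc
            exact hdev (hw _ hc)
          have hwi : w ⟨j, hjn⟩ = !d ⟨j, hjn⟩ := by
            cases hdi : d ⟨j, hjn⟩ <;> cases hwib : w ⟨j, hjn⟩ <;> simp_all
          have hcnt : ((List.finRange n).drop j).countP (fun i => w i != d i)
              = ((List.finRange n).drop (j + 1)).countP (fun i => w i != d i) + 1 := by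
            rw [hdrop, List.countP_cons]; simp [hdev]
          rw [hcnt] at h2 ⊢
          have hrk : r < k := by omega
          have hbd := drun_bij σ d hbij ((List.finRange n).drop j)
          have hv' : invFun (drun σ d ((List.finRange n).drop j)) (z r) = v := by
            apply hbd.injective
            rw [h1]
            exact invFun_eq ⟨v, h1⟩
          have hg := hprop _ hiB r hrk
          rw [gmap] at hg
          simp only [Fin.val_mk] at hg
          rw [hv'] at hg
          have hrec := ih (j + 1) (by omega) (σ ⟨j, hjn⟩ (!d ⟨j, hjn⟩) v) (r + 1) hg (by omega)
          rw [hdrop, List.foldl_cons, hwi, hrec]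
          congr 1
          omega
      · have hnil : (List.finRange n).drop j = [] :=
          List.drop_eq_nil_of_le (by simpa using Nat.le_of_not_lt hjn)
        simpa [hnil, drun] using h1

end Aux

/-- A forgetless streaming algorithm with state space `V` (`|V| = S`) computing an
`ε`-extractor for `(n,k)`-OBFSs with `ε < 1` and `n/S^k ≥ k` must have
`2^m (1-ε) ≤ k+1`. -/
theorem forgetless_streaming_lower_bound {V : Type} [Fintype V]
    (n k m : ℕ) (ε : ℝ) (σ : Fin n → Bool → V → V) (v0 : V)
    (φ : V → Fin m → Bool) (f : (Fin n → Bool) → (Fin m → Bool))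
    (hf : ∀ w, f w = φ (streamRun n σ v0 w))
    (hforget : ∀ i : Fin n, Function.Bijective (σ i false) ∨ Function.Bijective (σ i true))
    (hε : ε < 1) (hk : k ≤ n)
    (hnS : (k : ℝ) ≤ (n : ℝ) / (Fintype.card V : ℝ) ^ k)
    (hext : ∀ (L : Finset (Fin n)) (a : Fin n → Bool), L.card = n - k →
      (1 / 2 : ℝ) * ∑ y : Fin m → Bool,
          |((Finset.univ.filter fun w : Fin n → Bool =>
              (∀ i ∈ L, w i = a i) ∧ f w = y).card : ℝ) / 2 ^ k - 1 / 2 ^ m| ≤ ε) :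
    (2 ^ m : ℝ) * (1 - ε) ≤ k + 1 := by
  classical
  have hNe : Nonempty V := ⟨v0⟩
  -- default (bijective) directions
  set d : Fin n → Bool := fun i => if Function.Bijective (σ i false) then false else true with hd
  have hdi : ∀ i, d i = if Function.Bijective (σ i false) then false else true :=
    fun i => rfl
  have hbij : ∀ i, Function.Bijective (σ i (d i)) := by
    intro i
    rcases em (Function.Bijective (σ i false)) with h | h
    · rw [hdi, if_pos h]; exact h
    · rw [hdi, if_neg h]; exact (hforget i).resolve_left h
  -- cardinality bound  k * S^k ≤ n
  have hS1 : 1 ≤ Fintype.card V := Fintype.card_pos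
  have hcard : k * Fintype.card V ^ k ≤ n := by
    have hp : (0:ℝ) < (Fintype.card V : ℝ) ^ k := by positivity
    have h1 := (le_div_iff₀ hp).mp hnS
    have h2 : ((k * Fintype.card V ^ k : ℕ) : ℝ) ≤ (n : ℝ) := by push_cast; linarith
    exact_mod_cast h2
  -- pigeonhole: find B and the chain z
  obtain ⟨B, z, -, hBcard, hz0, hchain⟩ := pigeon (gmap σ d) k k (Finset.univ)
    (drun σ d (List.finRange n) v0) (by simpa using hcard)
  obtain ⟨B', hB'B, hB'card⟩ := Finset.exists_subset_card_eq hBcard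
  have hprop : ∀ i ∈ B', ∀ t < k, gmap σ d i (z t) = z (t + 1) :=
    fun i hi => hchain i (hB'B hi)
  set L : Finset (Fin n) := B'ᶜ with hL
  have hLcard : L.card = n - k := by
    simp [hL, Finset.card_compl, hB'card]
  -- the run collapses to the chain
  have hrun : ∀ w : Fin n → Bool, (∀ i ∈ L, w i = d i) → ∃ t ≤ k, f w = φ (z t) := by
    intro w hwL
    have hw : ∀ i, i ∉ B' → w i = d i := fun i hi => hwL i (by simpa [hL] using hi)
    have hcle : (List.finRange n).countP (fun i => w i != d i) ≤ k := by
      have hnodup : ((List.finRange n).filter (fun i => w i != d i)).Nodup :=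
        (List.nodup_finRange n).filter _
      have hsub : ((List.finRange n).filter (fun i => w i != d i)).toFinset ⊆ B' := by
        intro i hi
        rw [List.mem_toFinset, List.mem_filter] at hi
        by_contra hc
        have h3 := hw i hc
        simp [h3] at hi
      have h4 := Finset.card_le_card hsub
      rw [List.toFinset_card_of_nodup hnodup] at h4
      rw [List.countP_eq_length_filter]
      omega
    have hre := run_eq σ d w B' z k hbij hprop hw n 0 (by omega) v0 0
      (by simpa using hz0.symm) (by simpa using hcle)
    refine ⟨(List.finRange n).countP (fun i => w i != d i), hcle, ?_⟩
    rw [hf]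
    unfold streamRun
    exact congrArg φ (by simpa using hre)
  -- the possible outputs
  set Y : Finset (Fin m → Bool) := (Finset.range (k + 1)).image (fun t => φ (z t)) with hY
  have hYcard : Y.card ≤ k + 1 := le_trans Finset.card_image_le (by simp)
  have hmemY : ∀ w : Fin n → Bool, (∀ i ∈ L, w i = d i) → f w ∈ Y := by
    intro w hwL
    obtain ⟨t, ht, hft⟩ := hrun w hwL
    rw [hft, hY]
    exact Finset.mem_image.mpr ⟨t, Finset.mem_range.mpr (by omega), rfl⟩
  -- the source set and counting
  set P : Finset (Fin n → Bool) := Finset.univ.filter (fun w => ∀ i ∈ L, w i = d i) with hP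
  have hPcard : P.card = 2 ^ k := by
    have hPeq : P = Fintype.piFinset
        (fun i => if i ∈ L then ({d i} : Finset Bool) else Finset.univ) := by
      ext w
      simp only [hP, Finset.mem_filter, Finset.mem_univ, true_and, Fintype.mem_piFinset]
      constructor
      · intro h i
        by_cases hi : i ∈ L <;> simp [hi, h i]
      · intro h i hi
        have h5 := h i
        simpa [hi] using h5
    rw [hPeq, Fintype.card_piFinset]
    have hterm : ∀ i : Fin n,
        (if i ∈ L then ({d i} : Finset Bool) else Finset.univ).card = if i ∈ L then 1 else 2 := by
      intro i; by_cases hi : i ∈ L <;> simp [hi]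
    rw [Finset.prod_congr rfl (fun i _ => hterm i), ← Finset.prod_mul_prod_compl L]
    have hcompl : Lᶜ = B' := by rw [hL, compl_compl]
    rw [Finset.prod_congr rfl (fun i hi => if_pos hi),
      Finset.prod_congr (rfl : Lᶜ = Lᶜ) (fun i hi => if_neg (Finset.mem_compl.mp hi))]
    simp [hcompl, hB'card]
  have hsplit : ∀ y : Fin m → Bool,
      (Finset.univ.filter fun w : Fin n → Bool => (∀ i ∈ L, w i = d i) ∧ f w = y)
        = P.filter (fun w => f w = y) := by
    intro y
    rw [hP, Finset.filter_filter]
  have hsum : ∑ y ∈ Y, (P.filter (fun w => f w = y)).card = 2 ^ k := by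
    rw [← hPcard]
    exact (Finset.card_eq_sum_card_fiberwise
      (fun w hw => hmemY w (by simpa [hP] using hw))).symm
  have hzero : ∀ y ∉ Y, (P.filter (fun w => f w = y)).card = 0 := by
    intro y hy
    rw [Finset.card_eq_zero, Finset.filter_eq_empty_iff]
    intro w hwP hfw
    exact hy (hfw ▸ hmemY w (by simpa [hP] using hwP))
  -- statistical distance computation
  have hext' := hext L d hLcard
  have h2m : (0:ℝ) < 2 ^ m := by positivity
  have h2k : (0:ℝ) < 2 ^ k := by positivity
  set F : (Fin m → Bool) → ℝ := fun y =>
    |((Finset.univ.filter fun w : Fin n → Bool =>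
        (∀ i ∈ L, w i = d i) ∧ f w = y).card : ℝ) / 2 ^ k - 1 / 2 ^ m| with hF
  have hFc : ∀ y ∉ Y, F y = 1 / 2 ^ m := by
    intro y hy
    rw [hF]
    simp only [hsplit y, hzero y hy]
    rw [Nat.cast_zero, zero_div, zero_sub, abs_neg, abs_of_pos (by positivity)]
  have hYc_sum : ∑ y ∈ Yᶜ, F y = (Yᶜ.card : ℝ) * (1 / 2 ^ m) := by
    rw [Finset.sum_congr rfl (fun y hy => hFc y (Finset.mem_compl.mp hy)), Finset.sum_const,
      nsmul_eq_mul]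
  have hYcompl_card : (Yᶜ.card : ℝ) = 2 ^ m - Y.card := by
    rw [Finset.card_compl]
    have hYle : Y.card ≤ Fintype.card (Fin m → Bool) := Finset.card_le_univ Y
    rw [Nat.cast_sub hYle]
    congr 1
    rw [Fintype.card_fun]
    simp
  have hsumY_q : ∑ y ∈ Y, (((P.filter (fun w => f w = y)).card : ℝ) / 2 ^ k) = 1 := by
    rw [← Finset.sum_div]
    rw [div_eq_one_iff_eq (ne_of_gt h2k)]
    rw [← Nat.cast_sum]
    rw [hsum]
    push_cast
    ring
  have hYlow : (1 : ℝ) - Y.card * (1 / 2 ^ m) ≤ ∑ y ∈ Y, F y := by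
    have hstep : ∀ y ∈ Y, ((P.filter (fun w => f w = y)).card : ℝ) / 2 ^ k - 1 / 2 ^ m ≤ F y := by
      intro y _
      rw [hF]
      simp only [hsplit y]
      exact le_abs_self _
    calc (1 : ℝ) - Y.card * (1 / 2 ^ m)
        = ∑ y ∈ Y, (((P.filter (fun w => f w = y)).card : ℝ) / 2 ^ k - 1 / 2 ^ m) := by
          rw [Finset.sum_sub_distrib, hsumY_q, Finset.sum_const, nsmul_eq_mul]
      _ ≤ ∑ y ∈ Y, F y := Finset.sum_le_sum hstep
  have htotal : (1 : ℝ) - Y.card * (1 / 2 ^ m) ≤ ε := by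
    have hsplit_sum : ∑ y : Fin m → Bool, F y = ∑ y ∈ Y, F y + ∑ y ∈ Yᶜ, F y :=
      (Finset.sum_add_sum_compl Y F).symm
    have hmain : (2 : ℝ) - 2 * (Y.card * (1 / 2 ^ m)) ≤ ∑ y : Fin m → Bool, F y := by
      rw [hsplit_sum, hYc_sum, hYcompl_card]
      have h1 : ((2:ℝ) ^ m - Y.card) * (1 / 2 ^ m) = 1 - Y.card * (1/2^m) := by
        field_simp
      rw [h1]
      linarith [hYlow]
    have : (1/2 : ℝ) * ∑ y : Fin m → Bool, F y ≤ ε := hext'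
    linarith
  -- conclude
  have hcast : (Y.card : ℝ) ≤ k + 1 := by exact_mod_cast hYcard
  have hfin := mul_le_mul_of_nonneg_left htotal (le_of_lt h2m)
  have hexp : (2:ℝ) ^ m * (1 - Y.card * (1 / 2 ^ m)) = 2 ^ m - Y.card := by
    field_simp
  rw [hexp] at hfin
  nlinarith [hfin, hcast, h2m]
end

section
/- Suppose a streaming algorithm has state space V and update functions f_1, ..., f_n : V -> V (the step-1 updates after normalization), with |V| = S. Then there exist a subset F_k of {f_1,...,f_n} with |F_k| >= n / S^k and states v_0, v_1, ..., v_k in V such that every f in F_k satisfies f(v_i) = v_{i+1} for all 0 <= i < k. -/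
/-- Pigeonhole for streaming algorithms: given `n` functions `V → V` on a finite state
space of size `S`, there are a subfamily of at least `n/S^k` of them and states
`v_0, …, v_k` such that every function in the subfamily maps `v_i` to `v_{i+1}`. -/
theorem streaming_pigeonhole {V : Type} [Fintype V] [Nonempty V]
    (n k : ℕ) (f : Fin n → V → V) :
    ∃ (F : Finset (Fin n)) (v : Fin (k + 1) → V),
      (n : ℝ) / (Fintype.card V : ℝ) ^ k ≤ F.card ∧
      ∀ j ∈ F, ∀ i : Fin k, f j (v i.castSucc) = v i.succ := by
  induction k with
  | zero =>
    refine ⟨Finset.univ, fun _ => Classical.arbitrary V, by simp, fun j _ i => i.elim0⟩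
  | succ k ih =>
    obtain ⟨F, v, hF, hv⟩ := ih
    have hS : (0 : ℝ) < (Fintype.card V : ℝ) := by
      exact_mod_cast Fintype.card_pos
    classical
    obtain ⟨y, -, hy⟩ := Finset.exists_le_card_fiber_of_nsmul_le_card_of_maps_to
      (f := fun j => f j (v (Fin.last k))) (s := F) (t := Finset.univ)
      (fun a _ => Finset.mem_univ _) Finset.univ_nonempty
      (b := (F.card : ℝ) / (Fintype.card V : ℝ))
      (by
        rw [Finset.card_univ, nsmul_eq_mul, mul_div_cancel₀ _ hS.ne'])
    refine ⟨{x ∈ F | f x (v (Fin.last k)) = y}, Fin.snoc v y, ?_, ?_⟩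
    · refine le_trans ?_ hy
      rw [pow_succ, ← div_div]
      gcongr
    · intro j hj i
      simp only [Finset.mem_filter] at hj
      refine i.lastCases ?_ (fun i' => ?_)
      · simpa [Fin.snoc_castSucc, Fin.snoc_last] using hj.2
      · rw [Fin.succ_castSucc, Fin.snoc_castSucc, Fin.snoc_castSucc]
        exact hv j hj.1 i'
end

section
/- For every t >= 1, each term of the binomial distribution Bin(t, 1/2) has probability mass at most sqrt(2/(pi*t)); i.e., for all j with 0 <= j <= t, C(t,j)/2^t <= sqrt(2/(pi*t)). -/
/-!
The largest term of row `t` is the middle one, `C(t, ⌊t/2⌋)`, so after squaring it suffices that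
`π t C(t, ⌊t/2⌋)² ≤ 2 · 4^t`. For odd `t = 2n + 1` we have `C(2n+2, n+1) = 2 C(2n+1, n)`, so both
parities reduce to `π n C(2n, n)² ≤ 16^n`. This is the lower Wallis bound
`(2n+1)/(2n+2) · π/2 ≤ W n`, because the Wallis partial product is `W n = 16^n / (C(2n, n)² (2n+1))`.
-/

open Real Nat

namespace Nat

theorem centralBinom_mul_factorial_sq (n : ℕ) : centralBinom n * (n ! * n !) = (2 * n)! := by
  have h := choose_mul_factorial_mul_factorial (show n ≤ 2 * n by omega)
  rwa [show 2 * n - n = n by omega, mul_assoc] at h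

theorem centralBinom_succ_eq_two_mul_choose (n : ℕ) :
    centralBinom (n + 1) = 2 * (2 * n + 1).choose n := by
  rw [centralBinom_eq_two_mul_choose, show 2 * (n + 1) = 2 * n + 1 + 1 by ring,
    choose_succ_succ', choose_symm_half, ← two_mul]

end Nat

namespace Real.Wallis

theorem W_eq_sixteen_pow_div_centralBinom_sq (n : ℕ) :
    W n = 16 ^ n / ((centralBinom n : ℝ) ^ 2 * (2 * n + 1)) := by
  have hfac : ((2 * n)! : ℝ) = centralBinom n * (n ! * n !) := by
    exact_mod_cast (centralBinom_mul_factorial_sq n).symm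
  have hn : (n ! : ℝ) ≠ 0 := by positivity
  rw [W_eq_factorial_ratio, hfac, pow_mul]
  field_simp
  norm_num

end Real.Wallis

open Real.Wallis in
theorem pi_mul_centralBinom_sq_le (n : ℕ) : π * n * (centralBinom n : ℝ) ^ 2 ≤ 16 ^ n := by
  have hcb : (0 : ℝ) < centralBinom n := by exact_mod_cast centralBinom_pos n
  have hW := le_W n
  rw [W_eq_sixteen_pow_div_centralBinom_sq, le_div_iff₀ (by positivity)] at hW
  have hn : (n : ℝ) ≤ (2 * n + 1) ^ 2 / (4 * (n + 1)) := by
    rw [le_div_iff₀ (by positivity)]; nlinarith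
  calc π * n * (centralBinom n : ℝ) ^ 2
      ≤ π * (centralBinom n : ℝ) ^ 2 * ((2 * n + 1) ^ 2 / (4 * (n + 1))) := by
        rw [mul_right_comm]; gcongr
    _ = (2 * n + 1) / (2 * n + 2) * (π / 2) * ((centralBinom n : ℝ) ^ 2 * (2 * n + 1)) := by
        field_simp; ring
    _ ≤ 16 ^ n := hW

theorem pi_mul_choose_half_sq_le (t : ℕ) : π * t * (t.choose (t / 2) : ℝ) ^ 2 ≤ 2 * 4 ^ t := by
  rcases Nat.even_or_odd' t with ⟨n, rfl | rfl⟩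
  · rw [Nat.mul_div_cancel_left n two_pos, ← centralBinom_eq_two_mul_choose, pow_mul]
    push_cast
    norm_num
    linarith [pi_mul_centralBinom_sq_le n]
  · rw [show (2 * n + 1) / 2 = n by omega]
    have h := pi_mul_centralBinom_sq_le (n + 1)
    rw [centralBinom_succ_eq_two_mul_choose] at h
    have h16 : (16 : ℝ) ^ (n + 1) = 4 * 4 ^ (2 * n + 1) := by
      rw [show (16 : ℝ) = 4 ^ 2 by norm_num, ← pow_mul]; ring
    have hC : (0 : ℝ) ≤ π * ((2 * n + 1).choose n : ℝ) ^ 2 := by positivity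
    rw [h16] at h
    push_cast at h ⊢
    nlinarith [hC]

theorem binomial_term_le_general (t j : ℕ) (ht : 1 ≤ t) :
    (t.choose j : ℝ) / 2 ^ t ≤ Real.sqrt (2 / (Real.pi * t)) := by
  have hπt : 0 < π * t := by positivity
  calc (t.choose j : ℝ) / 2 ^ t ≤ t.choose (t / 2) / 2 ^ t := by
        gcongr; exact_mod_cast choose_le_middle j t
    _ ≤ Real.sqrt (2 / (Real.pi * t)) := by
        rw [Real.le_sqrt (by positivity) (by positivity), div_pow, ← pow_mul, pow_mul',
          div_le_div_iff₀ (by positivity) hπt]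
        norm_num
        linarith [pi_mul_choose_half_sq_le t]

/-- Each term of Bin(t, 1/2) has mass at most √(2/(π t)). -/
theorem binomial_term_le (t j : ℕ) (ht : 1 ≤ t) (hj : j ≤ t) :
    (t.choose j : ℝ) / 2 ^ t ≤ Real.sqrt (2 / (Real.pi * t)) :=
  binomial_term_le_general t j ht
end

section
/- There exist constants c1, c2 > 0 such that for all n, k in [n], and epsilon > 0 with m <= k - 2*log2(1/epsilon) - c1 and k >= max(log2(n-k), log2(log2(C(n,k)))) + 2*log2(1/epsilon) + c1, a uniformly random function f : {0,1}^n -> {0,1}^m is an epsilon-extractor for (n,k) oblivious bit-fixing sources with probability at least 1 - 2^{-c2 * 2^k * epsilon^2}. -/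
/-!
Fix a bit-fixing source, i.e. its support `X` with `#X = 2^k`. If the distribution of `f` on `X`
is more than `ε` away from uniform, then the test set `S = {y | Pr[f = y] > 2^-m}` receives at
least `2^k (|S|/2^m + ε)` points of `X`. For a uniformly random `f` the values `f w`, `w ∈ X`, are
independent, and the exponential moment at `t = ε/2` bounds the probability of this event by
`exp(-2^k ε²/4)`. A union bound over the `C(n,k) 2^(n-k)` supports and the `2^(2^m)` test sets
loses at most `2^(3A/32)` with `A = 2^k ε²`, because the hypotheses with `c₁ = 5` give
`log₂ C(n,k), n - k, 2^m ≤ A/32`; what is left is at most `2^(-A/8)`, so `c₂ = 1/8`.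
-/

open Finset Real

theorem half_sum_abs_eq_sum_filter_pos {ι : Type*} (s : Finset ι) (d : ι → ℝ)
    (hd : ∑ i ∈ s, d i = 0) : (1 / 2 : ℝ) * ∑ i ∈ s, |d i| = ∑ i ∈ s with 0 < d i, d i := by
  have hmax (i : ι) : (if 0 < d i then d i else 0) = (d i + |d i|) / 2 := by
    split_ifs with h
    · rw [abs_of_pos h]; ring
    · rw [abs_of_nonpos (not_lt.mp h)]; ring
  rw [sum_filter, sum_congr rfl fun i _ => hmax i, ← sum_div, sum_add_distrib, hd]
  ring

section

variable {α β : Type*} [Fintype β] [DecidableEq β]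

theorem exists_le_card_filter_mem_of_lt_half_sum_abs (X : Finset α) (f : α → β) {ε : ℝ}
    (h : ε < (1 / 2 : ℝ) * ∑ y, |(#{w ∈ X | f w = y} : ℝ) / #X - 1 / Fintype.card β|) :
    ∃ S : Finset β, #X * (#S / Fintype.card β + ε) ≤ #{w ∈ X | f w ∈ S} := by
  rcases X.eq_empty_or_nonempty with rfl | ⟨x, hx⟩
  · exact ⟨∅, by simp⟩
  set d : β → ℝ := fun y => (#{w ∈ X | f w = y} : ℝ) / #X - 1 / Fintype.card β
  have hX : (0 : ℝ) < #X := by exact_mod_cast card_pos.mpr ⟨x, hx⟩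
  have hβ : (0 : ℝ) < Fintype.card β := by exact_mod_cast Fintype.card_pos_iff.mpr ⟨f x⟩
  have hfib (S : Finset β) : ∑ y ∈ S, d y = #{w ∈ X | f w ∈ S} / #X - #S / Fintype.card β := by
    simp only [d, sum_sub_distrib, ← sum_div, sum_const, nsmul_eq_mul, mul_one]
    rw [← Nat.cast_sum, sum_card_fiberwise_eq_card_filter]
  have hd : ∑ y, d y = 0 := by
    rw [hfib, filter_true_of_mem fun _ _ => mem_univ _, card_univ, div_self hX.ne',
      div_self hβ.ne', sub_self]
  refine ⟨({y | 0 < d y} : Finset β), ?_⟩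
  rw [half_sum_abs_eq_sum_filter_pos _ _ hd, hfib, lt_sub_iff_add_lt, lt_div_iff₀ hX] at h
  linarith

end

section

variable {α β : Type*} [Fintype α] [DecidableEq α] [Fintype β] [DecidableEq β]

theorem sum_pow_card_filter_mem {R : Type*} [CommSemiring R] (X : Finset α) (S : Finset β)
    (r : R) :
    ∑ f : α → β, r ^ #{w ∈ X | f w ∈ S} =
      (#S * r + #Sᶜ) ^ #X * (Fintype.card β : R) ^ #Xᶜ := by
  set g : α → β → R := fun w y => if w ∈ X then (if y ∈ S then r else 1) else 1
  have hprod (f : α → β) : r ^ #{w ∈ X | f w ∈ S} = ∏ w, g w (f w) := by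
    rw [prod_ite_mem, univ_inter, ← prod_filter, prod_const]
  have hsum (w : α) : ∑ y, g w y = if w ∈ X then #S * r + #Sᶜ else (Fintype.card β : R) := by
    split_ifs with hw <;> simp [g, hw, sum_ite, filter_notMem_eq_sdiff, ← compl_eq_univ_sdiff]
  rw [Fintype.sum_congr _ _ hprod, ← Fintype.prod_sum g, Fintype.prod_congr _ _ hsum, prod_ite,
    prod_const, prod_const, filter_univ_mem, filter_notMem_eq_sdiff, ← compl_eq_univ_sdiff]

theorem one_add_mul_exp_sub_one_le {p t : ℝ} (hp : 0 ≤ p) (ht : |t| ≤ 1) :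
    1 + p * (exp t - 1) ≤ exp (p * (t + t ^ 2)) := by
  have hexp : exp t - 1 ≤ t + t ^ 2 := by
    linarith [(abs_le.mp (abs_exp_sub_one_sub_id_le ht)).2]
  calc 1 + p * (exp t - 1) ≤ 1 + p * (t + t ^ 2) := by gcongr
    _ ≤ exp (p * (t + t ^ 2)) := by linarith [add_one_le_exp (p * (t + t ^ 2))]

theorem sum_exp_mul_card_filter_mem_le [Nonempty β] (X : Finset α) (S : Finset β) {t : ℝ}
    (ht₀ : 0 ≤ t) (ht₁ : t ≤ 1) :
    ∑ f : α → β, exp (t * #{w ∈ X | f w ∈ S}) ≤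
      exp (#X * (#S / Fintype.card β * (t + t ^ 2))) * Fintype.card β ^ Fintype.card α := by
  set M : ℝ := (Fintype.card β : ℝ) with hM_def
  set p : ℝ := #S / M
  have hM : 0 < M := by positivity
  have hp : 0 ≤ p := by positivity
  have hcoord : #S * exp t + #Sᶜ = M * (1 + p * (exp t - 1)) := by
    have hMp : M * p = #S := mul_div_cancel₀ _ hM.ne'
    rw [card_compl, Nat.cast_sub S.card_le_univ, ← hM_def]
    linear_combination (1 - exp t) * hMp
  simp_rw [mul_comm t, exp_nat_mul]
  rw [sum_pow_card_filter_mem, hcoord, ← hM_def, ← card_add_card_compl X, pow_add, ← mul_assoc,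
    ← mul_pow, mul_comm _ M]
  gcongr
  · exact mul_nonneg hM.le
      (add_nonneg zero_le_one (mul_nonneg hp (sub_nonneg.2 (one_le_exp ht₀))))
  · exact one_add_mul_exp_sub_one_le hp (abs_le.mpr ⟨by linarith, ht₁⟩)

theorem chernoff_card_le_of_le_one [Nonempty β] (X : Finset α) (S : Finset β) {ε : ℝ}
    (hε₀ : 0 ≤ ε) (hε₁ : ε ≤ 1) :
    (#{f : α → β | #X * (#S / Fintype.card β + ε) ≤ #{w ∈ X | f w ∈ S}} : ℝ) ≤
      exp (-(#X * ε ^ 2 / 4)) * Fintype.card β ^ Fintype.card α := by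
  set M : ℝ := (Fintype.card β : ℝ) with hM_def
  set p : ℝ := #S / M
  set N : ℝ := (#X : ℝ)
  have hp₁ : p ≤ 1 :=
    div_le_one_of_le₀ (by rw [hM_def]; exact_mod_cast S.card_le_univ) (by positivity)
  have hmarkov : (#{f : α → β | N * (p + ε) ≤ #{w ∈ X | f w ∈ S}} : ℝ) *
      exp (ε / 2 * (N * (p + ε))) ≤ ∑ f : α → β, exp (ε / 2 * #{w ∈ X | f w ∈ S}) := by
    rw [← nsmul_eq_mul]
    refine (card_nsmul_le_sum _ _ _ fun f hf => ?_).trans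
      (sum_le_sum_of_subset_of_nonneg (filter_subset _ _) fun _ _ _ => (exp_pos _).le)
    gcongr
    exact (mem_filter.mp hf).2
  have hexponent :
      N * (p * (ε / 2 + (ε / 2) ^ 2)) - ε / 2 * (N * (p + ε)) ≤ -(N * ε ^ 2 / 4) := by
    have : p * (ε / 2) ^ 2 - ε / 2 * ε ≤ -(ε ^ 2 / 4) := by nlinarith
    nlinarith [mul_le_mul_of_nonneg_left this (by positivity : (0 : ℝ) ≤ N)]
  calc (#{f : α → β | N * (p + ε) ≤ #{w ∈ X | f w ∈ S}} : ℝ)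
      ≤ exp (N * (p * (ε / 2 + (ε / 2) ^ 2))) * M ^ Fintype.card α
          * exp (-(ε / 2 * (N * (p + ε)))) := by
        rw [exp_neg, ← div_eq_mul_inv, le_div_iff₀ (exp_pos _)]
        exact hmarkov.trans (sum_exp_mul_card_filter_mem_le X S (by positivity) (by linarith))
    _ = exp (N * (p * (ε / 2 + (ε / 2) ^ 2)) - ε / 2 * (N * (p + ε))) * M ^ Fintype.card α := by
        rw [sub_eq_add_neg, exp_add]; ring
    _ ≤ exp (-(N * ε ^ 2 / 4)) * M ^ Fintype.card α := by gcongr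

theorem chernoff_card_le [Nonempty β] (X : Finset α) (S : Finset β) {ε : ℝ} (hε : 0 ≤ ε) :
    (#{f : α → β | #X * (#S / Fintype.card β + ε) ≤ #{w ∈ X | f w ∈ S}} : ℝ) ≤
      exp (-(#X * ε ^ 2 / 4)) * Fintype.card β ^ Fintype.card α := by
  rcases le_or_gt ε 1 with hε₁ | hε₁
  · exact chernoff_card_le_of_le_one X S hε hε₁
  rcases X.eq_empty_or_nonempty with rfl | hX
  · simp
  rw [filter_false_of_mem fun f _ => ?_]
  · simp only [card_empty, Nat.cast_zero]
    positivity
  have hX : (0 : ℝ) < #X := by exact_mod_cast hX.card_pos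
  have hS : (0 : ℝ) ≤ #S / Fintype.card β := by positivity
  have : (#{w ∈ X | f w ∈ S} : ℝ) ≤ #X := by exact_mod_cast card_filter_le _ _
  intro h
  nlinarith

theorem card_exists_le_card_filter_mem_le [Nonempty β] (𝒳 : Finset (Finset α)) {N : ℕ}
    (h𝒳 : ∀ X ∈ 𝒳, #X = N) {ε : ℝ} (hε : 0 ≤ ε) :
    (#{f : α → β | ∃ X ∈ 𝒳, ∃ S : Finset β,
        N * (#S / Fintype.card β + ε) ≤ #{w ∈ X | f w ∈ S}} : ℝ) ≤
      #𝒳 * 2 ^ Fintype.card β * (exp (-(N * ε ^ 2 / 4)) * Fintype.card β ^ Fintype.card α) := by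
  have hunion : ({f : α → β | ∃ X ∈ 𝒳, ∃ S : Finset β,
        N * (#S / Fintype.card β + ε) ≤ #{w ∈ X | f w ∈ S}} : Finset (α → β)) =
      𝒳.biUnion fun X => univ.biUnion fun S : Finset β =>
        {f : α → β | #X * (#S / Fintype.card β + ε) ≤ #{w ∈ X | f w ∈ S}} := by
    ext f
    simp only [mem_filter, mem_univ, true_and, mem_biUnion]
    exact exists_congr fun X => and_congr_right fun hX => by rw [h𝒳 X hX]
  rw [hunion]
  calc _ ≤ (∑ X ∈ 𝒳, ∑ S : Finset β,
        #{f : α → β | #X * (#S / Fintype.card β + ε) ≤ #{w ∈ X | f w ∈ S}} : ℝ) := by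
        exact_mod_cast card_biUnion_le.trans (sum_le_sum fun X _ => card_biUnion_le)
    _ ≤ ∑ X ∈ 𝒳, ∑ S : Finset β,
        exp (-(N * ε ^ 2 / 4)) * Fintype.card β ^ Fintype.card α := by
        gcongr with X hX S
        rw [← h𝒳 X hX]
        exact chernoff_card_le X S hε
    _ = _ := by
        simp only [sum_const, card_univ, Fintype.card_finset, nsmul_eq_mul]
        push_cast
        ring

end

section

variable (ι β : Type*) [Fintype ι] [DecidableEq ι] [Fintype β] [DecidableEq β]

/-- `L` is the set of fixed coordinates and `b` their values; an oblivious fixing source is the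
uniform distribution on one of these sets. -/
def fixingSupports (r : ℕ) : Finset (Finset (ι → β)) :=
  (powersetCard r univ).biUnion fun L : Finset ι =>
    univ.image fun b : L → β => ({w : ι → β | ∀ i : L, w i = b i} : Finset (ι → β))

variable {ι β}

theorem card_filter_forall_eq (L : Finset ι) (b : L → β) :
    #{w : ι → β | ∀ i : L, w i = b i} = Fintype.card β ^ (Fintype.card ι - #L) := by
  have hpi : ({w : ι → β | ∀ i : L, w i = b i} : Finset (ι → β)) =
      Fintype.piFinset fun i => if h : i ∈ L then {b ⟨i, h⟩} else univ := by
    ext w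
    simp only [mem_filter, mem_univ, true_and, Fintype.mem_piFinset, Subtype.forall]
    refine forall_congr' fun i => ?_
    by_cases hi : i ∈ L <;> simp [hi]
  have hfactor (i : ι) : #(if h : i ∈ L then {b ⟨i, h⟩} else univ) =
      if i ∈ L then 1 else Fintype.card β := by
    split_ifs <;> simp
  rw [hpi, Fintype.card_piFinset, Fintype.prod_congr _ _ hfactor, prod_ite, prod_const_one,
    one_mul, prod_const, filter_notMem_eq_sdiff, ← compl_eq_univ_sdiff, card_compl]

theorem card_fixingSupports_le (r : ℕ) :
    #(fixingSupports ι β r) ≤ (Fintype.card ι).choose r * Fintype.card β ^ r :=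
  calc #(fixingSupports ι β r)
      ≤ ∑ L ∈ powersetCard r (univ : Finset ι), Fintype.card β ^ r :=
        card_biUnion_le.trans <| sum_le_sum fun L hL => card_image_le.trans <| by
          simp [mem_powersetCard_univ.mp hL]
    _ = (Fintype.card ι).choose r * Fintype.card β ^ r := by simp

theorem card_of_mem_fixingSupports {r : ℕ} {X : Finset (ι → β)} (hX : X ∈ fixingSupports ι β r) :
    #X = Fintype.card β ^ (Fintype.card ι - r) := by
  simp only [fixingSupports, mem_biUnion, mem_image, mem_univ, true_and,
    mem_powersetCard_univ] at hX
  obtain ⟨L, rfl, b, rfl⟩ := hX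
  exact card_filter_forall_eq L b

theorem filter_mem_fixingSupports (L : Finset ι) (a : ι → β) :
    ({w | ∀ i ∈ L, w i = a i} : Finset (ι → β)) ∈ fixingSupports ι β #L := by
  simp only [fixingSupports, mem_biUnion, mem_image, mem_univ, true_and, mem_powersetCard_univ]
  exact ⟨L, rfl, fun i => a i, by ext w; simp⟩

end

theorem card_eq_two_pow_of_mem_fixingSupports {n k : ℕ} (hkn : k ≤ n) {X : Finset (Fin n → Bool)}
    (hX : X ∈ fixingSupports (Fin n) Bool (n - k)) : #X = 2 ^ k := by
  rw [card_of_mem_fixingSupports hX, Fintype.card_bool, Fintype.card_fin, Nat.sub_sub_self hkn]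

theorem exists_fixingSupports_le_card_filter_mem {n k m : ℕ} (hkn : k ≤ n)
    (f : (Fin n → Bool) → (Fin m → Bool)) (L : Finset (Fin n)) (a : Fin n → Bool)
    (hL : #L = n - k) {ε : ℝ}
    (h : ε < (1 / 2 : ℝ) * ∑ y : Fin m → Bool,
      |(#{w : Fin n → Bool | (∀ i ∈ L, w i = a i) ∧ f w = y} : ℝ) / 2 ^ k - 1 / 2 ^ m|) :
    ∃ X ∈ fixingSupports (Fin n) Bool (n - k), ∃ S : Finset (Fin m → Bool),
      ((2 ^ k : ℕ) : ℝ) * (#S / Fintype.card (Fin m → Bool) + ε) ≤ #{w ∈ X | f w ∈ S} := by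
  set X : Finset (Fin n → Bool) := {w | ∀ i ∈ L, w i = a i}
  have hX : X ∈ fixingSupports (Fin n) Bool (n - k) := by
    rw [← hL]; convert filter_mem_fixingSupports L a
  have hcard : #X = 2 ^ k := card_eq_two_pow_of_mem_fixingSupports hkn hX
  obtain ⟨S, hS⟩ := exists_le_card_filter_mem_of_lt_half_sum_abs X f (ε := ε) (by
    simpa [X, filter_filter, hcard, Fintype.card_fun] using h)
  exact ⟨X, hX, S, by rwa [hcard] at hS⟩

theorem le_two_pow_mul_sq_div_of_logb_add_le {x ε c : ℝ} {k : ℕ} (hx : 0 ≤ x) (hε : 0 < ε)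
    (h : logb 2 x + 2 * logb 2 (1 / ε) + c ≤ k) : x ≤ 2 ^ k * ε ^ 2 / 2 ^ c := by
  rcases hx.eq_or_lt with rfl | hx
  · positivity
  have hlog : logb 2 (2 ^ k * ε ^ 2 / 2 ^ c) = k + 2 * logb 2 ε - c := by
    rw [logb_div (by positivity) (by positivity), logb_mul (by positivity) (by positivity),
      logb_pow, logb_pow, logb_rpow two_pos one_lt_two.ne', logb_self_eq_one one_lt_two]
    push_cast
    ring
  rw [← logb_le_logb one_lt_two hx (by positivity), hlog]
  rw [one_div, logb_inv] at h
  linarith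

theorem two_rpow_mul_exp_neg_le {s A : ℝ} (hA : 0 ≤ A) (hs : s ≤ 3 * A / 32) :
    2 ^ s * exp (-(A / 4)) ≤ 2 ^ (-(A / 8)) := by
  rw [rpow_def_of_pos two_pos, rpow_def_of_pos two_pos, ← exp_add, exp_le_exp]
  nlinarith [log_two_lt_d9, Real.log_pos one_lt_two]

theorem choose_mul_two_pow_mul_exp_le {n k m : ℕ} {ε : ℝ} (hkn : k ≤ n) (hε : 0 < ε)
    (hm : (m : ℝ) ≤ k - 2 * logb 2 (1 / ε) - 5)
    (hmax : max (logb 2 ((n : ℝ) - k)) (logb 2 (logb 2 (n.choose k)))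
      + 2 * logb 2 (1 / ε) + 5 ≤ k) :
    (n.choose k : ℝ) * 2 ^ (n - k) * 2 ^ (2 ^ m) * exp (-(2 ^ k * ε ^ 2 / 4)) ≤
      2 ^ (-(2 ^ k * ε ^ 2 / 8)) := by
  set A : ℝ := 2 ^ k * ε ^ 2
  have hbound {x : ℝ} (hx : 0 ≤ x) (h : logb 2 x + 2 * logb 2 (1 / ε) + 5 ≤ k) :
      x ≤ A / 32 := by
    have h32 : (2 : ℝ) ^ (5 : ℝ) = 32 := by norm_num
    simpa [A, h32] using le_two_pow_mul_sq_div_of_logb_add_le hx hε h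
  have hm' : (2 : ℝ) ^ m ≤ A / 32 := hbound (by positivity) (by
    rw [logb_pow, logb_self_eq_one one_lt_two]; linarith)
  have hnk : (n : ℝ) - k ≤ A / 32 := hbound (sub_nonneg.2 (by exact_mod_cast hkn))
    (by linarith [le_max_left (logb 2 ((n : ℝ) - k)) (logb 2 (logb 2 (n.choose k)))])
  have hC : logb 2 (n.choose k) ≤ A / 32 :=
    hbound (logb_nonneg one_lt_two (by exact_mod_cast Nat.choose_pos hkn))
      (by linarith [le_max_right (logb 2 ((n : ℝ) - k)) (logb 2 (logb 2 (n.choose k)))])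
  have hprod : (n.choose k : ℝ) * 2 ^ (n - k) * 2 ^ (2 ^ m) =
      2 ^ (logb 2 (n.choose k) + ((n : ℝ) - k) + (2 : ℝ) ^ m) := by
    rw [rpow_add two_pos, rpow_add two_pos, rpow_logb two_pos (by norm_num)
      (by exact_mod_cast Nat.choose_pos hkn), ← Nat.cast_sub hkn, rpow_natCast,
      show (2 : ℝ) ^ m = ((2 ^ m : ℕ) : ℝ) by push_cast; rfl, rpow_natCast]
  rw [hprod]
  exact two_rpow_mul_exp_neg_le (by positivity) (by linarith)

theorem one_sub_le_card_filter_div {F : Type*} [Fintype F] [Nonempty F] (P : F → Prop)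
    [DecidablePred P] {q : ℝ} (h : (#{f | ¬P f} : ℝ) ≤ q * Fintype.card F) :
    1 - q ≤ #{f | P f} / Fintype.card F := by
  have hsplit : (#{f | P f} : ℝ) + #{f | ¬P f} = Fintype.card F := by
    exact_mod_cast card_filter_add_card_filter_not (s := univ) (p := P)
  rw [le_div_iff₀ (by positivity)]
  linarith

open Classical in
/-- There are constants `c₁, c₂ > 0` such that, under the stated parameter constraints,
a uniformly random function `f : {0,1}ⁿ → {0,1}^m` is an `ε`-extractor for `(n,k)`
oblivious bit-fixing sources with probability at least `1 - 2^{-c₂·2^k·ε²}`. -/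
theorem random_function_is_extractor :
    ∃ c1 : ℝ, 0 < c1 ∧ ∃ c2 : ℝ, 0 < c2 ∧
      ∀ (n k m : ℕ) (ε : ℝ), 1 ≤ k → k ≤ n → 0 < ε →
        (m : ℝ) ≤ k - 2 * Real.logb 2 (1 / ε) - c1 →
        max (Real.logb 2 (n - k)) (Real.logb 2 (Real.logb 2 (n.choose k)))
            + 2 * Real.logb 2 (1 / ε) + c1 ≤ k →
        1 - (2 : ℝ) ^ (-(c2 * 2 ^ k * ε ^ 2)) ≤
          ((Finset.univ.filter fun f : (Fin n → Bool) → (Fin m → Bool) =>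
              ∀ (L : Finset (Fin n)) (a : Fin n → Bool), L.card = n - k →
                (1 / 2 : ℝ) * ∑ y : Fin m → Bool,
                    |((Finset.univ.filter fun w : Fin n → Bool =>
                        (∀ i ∈ L, w i = a i) ∧ f w = y).card : ℝ) / 2 ^ k
                      - 1 / 2 ^ m| ≤ ε).card : ℝ)
            / Fintype.card ((Fin n → Bool) → (Fin m → Bool)) := by
  refine ⟨5, by norm_num, 1 / 8, by norm_num, fun n k m ε _ hkn hε hm hmax => ?_⟩
  have hsupp : (#(fixingSupports (Fin n) Bool (n - k)) : ℝ) ≤ n.choose k * 2 ^ (n - k) := by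
    exact_mod_cast (card_fixingSupports_le (n - k)).trans_eq (by simp [Nat.choose_symm hkn])
  apply one_sub_le_card_filter_div
  calc _ ≤ (#{f : (Fin n → Bool) → (Fin m → Bool) | ∃ X ∈ fixingSupports (Fin n) Bool (n - k),
          ∃ S : Finset (Fin m → Bool), ((2 ^ k : ℕ) : ℝ) * (#S / Fintype.card (Fin m → Bool) + ε) ≤
            #{w ∈ X | f w ∈ S}} : ℝ) := by
        gcongr with f
        intro hf
        push Not at hf
        obtain ⟨L, a, hL, hlt⟩ := hf
        exact exists_fixingSupports_le_card_filter_mem hkn f L a hL hlt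
    _ ≤ _ := card_exists_le_card_filter_mem_le _
          (fun X hX => card_eq_two_pow_of_mem_fixingSupports hkn hX) hε.le
    _ ≤ n.choose k * 2 ^ (n - k) * 2 ^ (2 ^ m) * exp (-(2 ^ k * ε ^ 2 / 4)) *
          Fintype.card ((Fin n → Bool) → (Fin m → Bool)) := by
        simp only [Fintype.card_fun, Fintype.card_bool, Fintype.card_fin]
        push_cast
        rw [mul_assoc _ (exp _)]
        gcongr
    _ ≤ 2 ^ (-(2 ^ k * ε ^ 2 / 8)) * Fintype.card ((Fin n → Bool) → (Fin m → Bool)) := by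
        gcongr
        exact choose_mul_two_pow_mul_exp_le hkn hε hm hmax
    _ = _ := by ring_nf
end

section
/- There exist constants c1, c2 > 0 such that the following holds. Let A : {0,1}^n -> {0,1}^d be the adversary that adaptively reads exactly d bits of its input (a depth-d decision tree) and outputs them in order, so that (A(U_n), U_m) is uniform on {0,1}^{d+m}. If m <= n - d - 2*log2(1/epsilon) - c1, then a uniformly random function f : {0,1}^n -> {0,1}^m satisfies Delta((A(U_n), f(U_n)), U_{d+m}) <= epsilon with probability at least 1 - 2^{-c2 * 2^n * epsilon^2} over the choice of f. -/
/-! Fix a test `T ⊆ {0,1}^d × {0,1}^m`. The number of inputs `w` with `(A w, f w) ∈ T` is a sum of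
`2ⁿ` independent indicators (the values `f w` are independent and uniform), whose mean is
`2ⁿ |T| / 2^(d+m)` because `A` is regular; by Hoeffding it exceeds its mean by `ε 2ⁿ` with
probability at most `exp (-2 ε² 2ⁿ)`. A statistical distance above `ε` is witnessed by such a test,
namely the set where the empirical distribution of `(A w, f w)` exceeds the uniform one. A union
bound over all `2^(2^(d+m))` tests loses a factor at most `2^(ε² 2ⁿ / 2)` once `c₁ = 1`. -/

open Finset Real MeasureTheory ProbabilityTheory Fintype
open scoped NNReal

theorem measureReal_uniformOn_univ_finset {Ω : Type*} [Fintype Ω] [MeasurableSpace Ω]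
    [MeasurableSingletonClass Ω] (F : Finset Ω) :
    (uniformOn (Set.univ : Set Ω)).real F = #F / card Ω := by
  simp [measureReal_def, uniformOn_univ, ENNReal.toReal_div]

/-- Hoeffding's inequality for the independent indicators of `f w ∈ S w`, where `f` is a uniformly
random function `W → Y`. -/
theorem card_filter_card_mem_ge_le {W Y : Type*} [Fintype W] [DecidableEq W] [Fintype Y]
    [DecidableEq Y] [Nonempty Y] (S : W → Finset Y) {s : ℝ} (hs : 0 ≤ s) :
    (#{f : W → Y | ∑ w, (#(S w) : ℝ) / card Y + s ≤ #{w | f w ∈ S w}} : ℝ)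
      ≤ card (W → Y) * exp (-2 * s ^ 2 / card W) := by
  let _ : MeasurableSpace Y := ⊤
  let μ : Measure (W → Y) := Measure.pi fun _ => uniformOn Set.univ
  have hμ : μ = uniformOn Set.univ := by rw [← Set.pi_univ Set.univ, uniformOn_pi]
  let X (w : W) (f : W → Y) : ℝ := if f w ∈ S w then 1 else 0
  have hmean (w : W) : ∫ f, X w f ∂μ = #(S w) / card Y := by
    have hX : X w = (Function.eval w ⁻¹' (S w : Set Y)).indicator 1 := by
      ext f
      by_cases h : f w ∈ S w <;> simp [X, h]
    rw [hX, integral_indicator_one (measurableSet_preimage (measurable_pi_apply w) (by simp)),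
      (measurePreserving_eval _ w).measureReal_preimage (S w).measurableSet.nullMeasurableSet,
      measureReal_uniformOn_univ_finset]
  have hindep : iIndepFun (fun w f => X w f - ∫ f, X w f ∂μ) μ :=
    iIndepFun_pi (X := fun w (y : Y) => (if y ∈ S w then 1 else 0 : ℝ) - ∫ f, X w f ∂μ)
      fun _ => by fun_prop
  have hsubG : ∀ w ∈ (univ : Finset W),
      HasSubgaussianMGF (fun f => X w f - ∫ f, X w f ∂μ) ((‖(1 : ℝ) - 0‖₊ / 2) ^ 2) μ :=
    fun w _ => hasSubgaussianMGF_of_mem_Icc (by fun_prop) <| ae_of_all _ fun f => by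
      simp only [X, Set.mem_Icc]
      split_ifs <;> norm_num
  have hoeff := HasSubgaussianMGF.measure_sum_ge_le_of_iIndepFun hindep hsubG hs
  have hset : {f | s ≤ ∑ w ∈ univ, (X w f - ∫ f, X w f ∂μ)} =
      ({f | ∑ w, (#(S w) : ℝ) / card Y + s ≤ #{w | f w ∈ S w}} : Finset (W → Y)) := by
    ext f
    simp only [Set.mem_ofPred_eq, coe_filter, mem_univ, true_and, sum_sub_distrib, hmean, X,
      sum_boole]
    constructor <;> intro h <;> linarith
  have hvar : ((∑ _w : W, (‖(1 : ℝ) - 0‖₊ / 2) ^ 2 : ℝ≥0) : ℝ) = card W / 4 := by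
    push_cast
    simp only [sub_zero, norm_one, sum_const, card_univ, nsmul_eq_mul]
    ring
  rw [hset, hμ, measureReal_uniformOn_univ_finset, div_le_iff₀ (by positivity), hvar,
    mul_comm] at hoeff
  refine hoeff.trans_eq ?_
  congr 2
  rw [show 2 * ((card W : ℝ) / 4) = card W / 2 by ring, div_div_eq_mul_div]
  ring

theorem half_mul_sum_abs_eq_sum_filter_pos {ι : Type*} [Fintype ι] (a : ι → ℝ)
    (h : ∑ i, a i = 0) : 1 / 2 * ∑ i, |a i| = ∑ i with 0 < a i, a i := by
  have hpos : ∑ i with 0 < a i, |a i| = ∑ i with 0 < a i, a i :=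
    sum_congr rfl fun i hi => abs_of_pos (mem_filter.mp hi).2
  have hneg : ∑ i with ¬0 < a i, |a i| = -∑ i with ¬0 < a i, a i := by
    rw [← sum_neg_distrib]
    exact sum_congr rfl fun i hi => abs_of_nonpos (not_lt.mp (mem_filter.mp hi).2)
  have hsplit := sum_filter_add_sum_filter_not univ (fun i => 0 < a i) a
  rw [← sum_filter_add_sum_filter_not univ (fun i => 0 < a i), hpos, hneg]
  linarith

section
variable {W Z : Type*} [Fintype W] [Fintype Z] [DecidableEq Z]

noncomputable def distFromUniform (g : W → Z) : ℝ :=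
  1 / 2 * ∑ z, |(#{w | g w = z} : ℝ) / card W - 1 / card Z|

theorem exists_test_of_lt_distFromUniform [Nonempty W] {g : W → Z} {ε : ℝ}
    (h : ε < distFromUniform g) :
    ∃ T : Finset Z, card W * (#T / card Z + ε) < #{w | g w ∈ T} := by
  have : Nonempty Z := .map g ‹_›
  set a : Z → ℝ := fun z => (#{w | g w = z} : ℝ) / card W - 1 / card Z
  have hcard (T : Finset Z) : ∑ z ∈ T, (#{w | g w = z} : ℝ) = #{w | g w ∈ T} := by
    exact_mod_cast sum_card_fiberwise_eq_card_filter univ T g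
  have hsum : ∑ z, a z = 0 := by
    simp only [a, sum_sub_distrib, ← sum_div, hcard, mem_univ, filter_true, sum_const, card_univ,
      nsmul_eq_mul]
    field_simp
    ring
  set T : Finset Z := {z | 0 < a z}
  have hT : distFromUniform g = #{w | g w ∈ T} / card W - #T / card Z := by
    rw [distFromUniform, half_mul_sum_abs_eq_sum_filter_pos a hsum]
    simp only [T, a, sum_sub_distrib, ← sum_div, hcard, sum_const, nsmul_eq_mul, mul_one]
  refine ⟨T, ?_⟩
  rw [hT, lt_sub_iff_add_lt, lt_div_iff₀ (by positivity)] at h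
  linarith
end

theorem card_eq_sum_card_section {X Y : Type*} [Fintype X] [Fintype Y] [DecidableEq X]
    [DecidableEq Y] (T : Finset (X × Y)) : #T = ∑ x, #{y | (x, y) ∈ T} := by
  simp_rw [card_filter, ← Fintype.sum_prod_type', ← card_filter]
  congr 1
  ext
  simp

theorem sum_card_section_div_card_eq {W X Y : Type*} [Fintype W] [Fintype X] [Fintype Y]
    [DecidableEq X] [DecidableEq Y] {A : W → X} {k : ℕ} (hA : ∀ x, #{w | A w = x} = k)
    (T : Finset (X × Y)) :
    ∑ w, (#{y | (A w, y) ∈ T} : ℝ) / card Y = card W * (#T / card (X × Y)) := by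
  have hW : card W = card X * k := by
    rw [← card_univ, card_eq_sum_card_fiberwise fun w _ => mem_univ (A w)]
    simp [hA]
  calc ∑ w, (#{y | (A w, y) ∈ T} : ℝ) / card Y
      = ∑ x, ∑ w with A w = x, (#{y | (x, y) ∈ T} : ℝ) / card Y :=
        (Finset.sum_fiberwise' univ A fun x => (#{y | (x, y) ∈ T} : ℝ) / card Y).symm
    _ = k * (#T / card Y) := by
      simp only [sum_const, hA, nsmul_eq_mul, ← mul_sum, ← sum_div, card_eq_sum_card_section T]
      push_cast
      rfl
    _ = card W * (#T / card (X × Y)) := by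
      rcases isEmpty_or_nonempty X with hX | hX
      · simp [hW, Subsingleton.elim T ∅]
      · rw [hW, card_prod]
        push_cast
        field_simp

theorem card_filter_lt_distFromUniform_le {W X Y : Type*} [Fintype W] [DecidableEq W]
    [Nonempty W] [Fintype X] [DecidableEq X] [Fintype Y] [DecidableEq Y] [Nonempty Y]
    {A : W → X} {k : ℕ} (hA : ∀ x, #{w | A w = x} = k) {ε : ℝ} (hε : 0 ≤ ε) :
    (#{f : W → Y | ε < distFromUniform fun w => (A w, f w)} : ℝ)
      ≤ 2 ^ card (X × Y) * (card (W → Y) * exp (-2 * (card W * ε ^ 2))) := by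
  let slice (T : Finset (X × Y)) : W → Finset Y := fun w => {y | (A w, y) ∈ T}
  let bad (T : Finset (X × Y)) : Finset (W → Y) :=
    {f | ∑ w, (#(slice T w) : ℝ) / card Y + ε * card W ≤ #{w | f w ∈ slice T w}}
  have hsub : ({f | ε < distFromUniform fun w => (A w, f w)} : Finset (W → Y)) ⊆
      univ.biUnion bad := by
    intro f hf
    obtain ⟨T, hT⟩ := exists_test_of_lt_distFromUniform (mem_filter.mp hf).2
    refine mem_biUnion.mpr ⟨T, mem_univ _, mem_filter.mpr ⟨mem_univ _, ?_⟩⟩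
    simp only [slice, sum_card_section_div_card_eq hA, mem_filter, mem_univ, true_and]
    linarith
  have hbad : ∀ T, (#(bad T) : ℝ) ≤ card (W → Y) * exp (-2 * (card W * ε ^ 2)) := fun T => by
    refine (card_filter_card_mem_ge_le (slice T) (by positivity)).trans_eq ?_
    congr 2
    field_simp
  calc (#{f : W → Y | ε < distFromUniform fun w => (A w, f w)} : ℝ)
      ≤ #(univ.biUnion bad) := by exact_mod_cast card_le_card hsub
    _ ≤ ∑ T, (#(bad T) : ℝ) := by exact_mod_cast card_biUnion_le
    _ ≤ ∑ _T : Finset (X × Y), card (W → Y) * exp (-2 * (card W * ε ^ 2)) :=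
      sum_le_sum fun T _ => hbad T
    _ = 2 ^ card (X × Y) * (card (W → Y) * exp (-2 * (card W * ε ^ 2))) := by
      simp [card_finset]

theorem one_sub_le_card_filter_distFromUniform_le_div {W X Y : Type*} [Fintype W]
    [DecidableEq W] [Nonempty W] [Fintype X] [DecidableEq X] [Fintype Y] [DecidableEq Y]
    [Nonempty Y] {A : W → X} {k : ℕ} (hA : ∀ x, #{w | A w = x} = k) {ε : ℝ} (hε : 0 ≤ ε) :
    1 - 2 ^ card (X × Y) * exp (-2 * (card W * ε ^ 2))
      ≤ #{f : W → Y | distFromUniform (fun w => (A w, f w)) ≤ ε} / card (W → Y) := by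
  have hsplit := card_filter_add_card_filter_not (s := univ)
    fun f : W → Y => distFromUniform (fun w => (A w, f w)) ≤ ε
  simp only [not_le, card_univ] at hsplit
  have hbad := card_filter_lt_distFromUniform_le (Y := Y) hA hε
  rw [← hsplit, Nat.cast_add] at hbad
  rw [le_div_iff₀ (by positivity), ← hsplit, Nat.cast_add]
  linarith

theorem two_pow_le_of_le_sub_two_logb {a n : ℕ} {ε : ℝ} (hε : 0 < ε)
    (h : (a : ℝ) ≤ n - 2 * logb 2 (1 / ε) - 1) : (2 : ℝ) ^ a ≤ 2 ^ n * ε ^ 2 / 2 := by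
  have hlogb : logb 2 (2 ^ n * ε ^ 2 / 2) = n - 2 * logb 2 (1 / ε) - 1 := by
    rw [logb_div (by positivity) two_ne_zero, logb_mul (by positivity) (by positivity),
      logb_pow, logb_pow, logb_self_eq_one one_lt_two, one_div, logb_inv]
    push_cast
    ring
  rwa [← rpow_natCast, ← le_logb_iff_rpow_le one_lt_two (by positivity), hlogb]

theorem two_pow_mul_exp_le {K : ℕ} {x : ℝ} (hx : 0 ≤ x) (hK : (K : ℝ) ≤ x / 2) :
    (2 : ℝ) ^ K * exp (-2 * x) ≤ 2 ^ (-x) := by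
  rw [← rpow_natCast, rpow_def_of_pos two_pos, rpow_def_of_pos two_pos, ← exp_add, exp_le_exp]
  nlinarith [log_two_lt_d9, log_two_gt_d9]

open Classical in
/-- There are constants `c₁, c₂ > 0` such that for any regular adversary `A` reading
`d` bits (every output string has exactly `2^{n-d}` preimages) and
`m ≤ n - d - 2log₂(1/ε) - c₁`, a uniformly random `f : {0,1}ⁿ → {0,1}^m` satisfies
`Δ((A(U_n), f(U_n)), U_{d+m}) ≤ ε` with probability at least `1 - 2^{-c₂·2ⁿ·ε²}`. -/
theorem random_function_fools_one_adversary :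
    ∃ c1 : ℝ, 0 < c1 ∧ ∃ c2 : ℝ, 0 < c2 ∧
      ∀ (n d m : ℕ) (ε : ℝ) (A : (Fin n → Bool) → (Fin d → Bool)), d ≤ n → 0 < ε →
        (∀ x : Fin d → Bool,
          (Finset.univ.filter fun w : Fin n → Bool => A w = x).card = 2 ^ (n - d)) →
        (m : ℝ) ≤ (n : ℝ) - d - 2 * Real.logb 2 (1 / ε) - c1 →
        1 - (2 : ℝ) ^ (-(c2 * 2 ^ n * ε ^ 2)) ≤
          ((Finset.univ.filter fun f : (Fin n → Bool) → (Fin m → Bool) =>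
              (1 / 2 : ℝ) * ∑ x : Fin d → Bool, ∑ y : Fin m → Bool,
                  |((Finset.univ.filter fun w : Fin n → Bool =>
                      A w = x ∧ f w = y).card : ℝ) / 2 ^ n - 1 / 2 ^ (d + m)| ≤ ε).card : ℝ)
            / Fintype.card ((Fin n → Bool) → (Fin m → Bool)) := by
  refine ⟨1, one_pos, 1, one_pos, fun n d m ε A _ hε hA hm => ?_⟩
  have hdist : ∀ f : (Fin n → Bool) → (Fin m → Bool),
      (1 / 2 : ℝ) * ∑ x : Fin d → Bool, ∑ y : Fin m → Bool,
        |((Finset.univ.filter fun w : Fin n → Bool => A w = x ∧ f w = y).card : ℝ) / 2 ^ n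
          - 1 / 2 ^ (d + m)| = distFromUniform fun w => (A w, f w) := by
    intro f
    simp [distFromUniform, Fintype.sum_prod_type, Prod.ext_iff, pow_add]
  simp only [hdist]
  have hsize := two_pow_le_of_le_sub_two_logb (a := d + m) (n := n) hε (by push_cast; linarith)
  have harith := two_pow_mul_exp_le (K := card ((Fin d → Bool) × (Fin m → Bool)))
    (x := 2 ^ n * ε ^ 2) (by positivity) (by simpa [pow_add] using hsize)
  refine le_trans (sub_le_sub_left ?_ 1) (one_sub_le_card_filter_distFromUniform_le_div hA hε.le)
  simpa using harith
end

section
/- There exist constants c1, c2, c3 > 0 such that for all n, k in [n], and epsilon >= c3 * sqrt(n / 2^n), a uniformly random function f : {0,1}^n -> {0,1}^m with m <= k - 2*log2(1/epsilon) - c1 is a static (k,epsilon)-ERF with probability at least 1 - 2^{-c2 * 2^n * epsilon^2}. -/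
/-!
For a fixed set `L`, the statistical distance is `1/2 · max_c ∑ c(r, y) D(r, y)` over sign patterns
`c : R → Y → {-1, 0, 1}`, and for a fixed `c` the correlation `∑ c D` is the average over the `2ⁿ`
inputs `w` of the independent, bounded, centred terms `c(w|_L, f w) - 𝔼_y c(w|_L, y)`. Hoeffding's
inequality makes it exceed `2ε` with probability at most `exp(-2ⁿε²/2)`. A union bound over the
`3^(2^(n-k) 2^m)` sign patterns and the `C(n, n-k) ≤ 2ⁿ` sets `L` loses a factor
`2^(n + 2^(n-k+m+1))`, and the hypotheses on `ε` and `m` make this exponent a small multiple of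
`2ⁿε²`.
-/

open MeasureTheory ProbabilityTheory Finset

/-- Hoeffding's inequality, counting functions `f : W → V` instead of measuring them. -/
theorem card_sum_ge_le_of_mem_Icc {W V : Type*} [Fintype W] [DecidableEq W] [Fintype V]
    [Nonempty V] (g : W → V → ℝ) {a b : ℝ} (hg : ∀ w v, g w v ∈ Set.Icc a b)
    (hmean : ∀ w, ∑ v, g w v = 0) {t : ℝ} (ht : 0 ≤ t) :
    (#{f : W → V | Fintype.card W * t ≤ ∑ w, g w (f w)} : ℝ) ≤
      Real.exp (-2 * Fintype.card W * t ^ 2 / (b - a) ^ 2) * Fintype.card V ^ Fintype.card W := by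
  let _ : MeasurableSpace V := ⊤
  have _ : DiscreteMeasurableSpace V := ⟨fun _ => trivial⟩
  set μV : Measure V := uniformOn Set.univ
  set μ : Measure (W → V) := Measure.pi fun _ => μV
  have hsub : ∀ w, HasSubgaussianMGF (fun f : W → V => g w (f w)) ((‖b - a‖₊ / 2) ^ 2) μ := by
    intro w
    refine HasSubgaussianMGF.of_map (Y := Function.eval w) (measurable_pi_apply w).aemeasurable ?_
    rw [(measurePreserving_eval (fun _ => μV) w).map_eq]
    refine hasSubgaussianMGF_of_mem_Icc_of_integral_eq_zero Measurable.of_discrete.aemeasurable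
      (ae_of_all _ (hg w)) ?_
    rw [integral_fintype .of_finite]
    simp only [μV, measureReal_def, uniformOn_univ, Measure.count_singleton, smul_eq_mul,
      ← Finset.mul_sum, hmean w, mul_zero]
  have hind : iIndepFun (fun w (f : W → V) => g w (f w)) μ :=
    iIndepFun_pi fun w => Measurable.of_discrete.aemeasurable
  have hμ : μ = uniformOn Set.univ := by
    simp only [μ, μV, ← uniformOn_pi, Set.pi_univ]
  have h := HasSubgaussianMGF.measure_sum_ge_le_of_iIndepFun hind (s := univ) (fun w _ => hsub w)
    (mul_nonneg (Nat.cast_nonneg (Fintype.card W)) ht)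
  rw [hμ, measureReal_def, uniformOn_univ] at h
  simp only [← Finset.coe_filter_univ, Measure.count_apply_finset, ENNReal.toReal_div,
    ENNReal.toReal_natCast, Fintype.card_fun, Nat.cast_pow, sum_const, card_univ, nsmul_eq_mul,
    NNReal.coe_mul, NNReal.coe_natCast, NNReal.coe_pow, NNReal.coe_div, coe_nnnorm,
    NNReal.coe_ofNat, Real.norm_eq_abs, div_pow, sq_abs, ENNReal.toReal_pow] at h
  rw [div_le_iff₀ (by positivity)] at h
  refine h.trans_eq ?_
  congr 2
  rcases eq_or_ne (Fintype.card W : ℝ) 0 with hW | hW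
  · simp [hW]
  · field_simp

section Deviation

variable {W R Y : Type*} [Fintype W] [Fintype R] [Fintype Y]

lemma sum_card_fiber_mul {β : Type*} [Fintype β] [DecidableEq β] (p : W → β) (c : β → ℝ) :
    ∑ b, #{w | p w = b} * c b = ∑ w, c (p w) := by
  simp_rw [← Finset.sum_fiberwise' univ p c, sum_const, nsmul_eq_mul]

variable [DecidableEq R] [DecidableEq Y]

/-- For `U` uniform on `W`, `deviation p f r y` is `P[(p U, f U) = (r, y)] - P[(p U, U_Y) = (r, y)]`
and `statDist p f` is the statistical distance between `(p U, f U)` and `(p U, U_Y)`. -/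
noncomputable def deviation (p : W → R) (f : W → Y) (r : R) (y : Y) : ℝ :=
  #{w | p w = r ∧ f w = y} / Fintype.card W -
    #{w | p w = r} / Fintype.card W * (1 / Fintype.card Y)

noncomputable def statDist (p : W → R) (f : W → Y) : ℝ :=
  1 / 2 * ∑ r, ∑ y, |deviation p f r y|

lemma sum_mul_deviation (p : W → R) (f : W → Y) (c : R → Y → ℝ) :
    ∑ r, ∑ y, c r y * deviation p f r y =
      (Fintype.card W : ℝ)⁻¹ *
        ∑ w, (c (p w) (f w) - (Fintype.card Y : ℝ)⁻¹ * ∑ y, c (p w) y) := by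
  have joint : ∑ r, ∑ y, #{w | p w = r ∧ f w = y} * c r y = ∑ w, c (p w) (f w) := by
    simpa only [Fintype.sum_prod_type, Prod.ext_iff] using
      sum_card_fiber_mul (fun w => (p w, f w)) (fun q => c q.1 q.2)
  have marginal : ∑ r, #{w | p w = r} * ∑ y, c r y = ∑ w, ∑ y, c (p w) y :=
    sum_card_fiber_mul p fun r => ∑ y, c r y
  have split : ∀ r y, c r y * deviation p f r y =
      (Fintype.card W : ℝ)⁻¹ * (#{w | p w = r ∧ f w = y} * c r y) -
        (Fintype.card W : ℝ)⁻¹ * ((Fintype.card Y : ℝ)⁻¹ * (#{w | p w = r} * c r y)) := by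
    intro r y
    unfold deviation
    ring
  simp only [split, sum_sub_distrib, ← mul_sum, joint, marginal, mul_sub]

lemma exists_sign_lt_sum_mul_deviation {p : W → R} {f : W → Y} {ε : ℝ}
    (h : ε < statDist p f) :
    ∃ c : R → Y → SignType, 2 * ε < ∑ r, ∑ y, (c r y : ℝ) * deviation p f r y :=
  ⟨fun r y => SignType.sign (deviation p f r y), by
    simp only [sign_mul_self]; unfold statDist at h; linarith⟩

lemma card_lt_sum_mul_deviation_le [DecidableEq W] [Nonempty Y] (p : W → R) (c : R → Y → ℝ)
    (hc : ∀ r y, c r y ∈ Set.Icc (-1) 1) {δ : ℝ} (hδ : 0 ≤ δ) :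
    (#{f : W → Y | δ < ∑ r, ∑ y, c r y * deviation p f r y} : ℝ) ≤
      Real.exp (-(Fintype.card W * δ ^ 2 / 8)) * Fintype.card Y ^ Fintype.card W := by
  set g : W → Y → ℝ := fun w v => c (p w) v - (Fintype.card Y : ℝ)⁻¹ * ∑ y, c (p w) y
  have hY : (0 : ℝ) < Fintype.card Y := Nat.cast_pos.2 Fintype.card_pos
  have hg : ∀ w v, g w v ∈ Set.Icc (-2) 2 := by
    intro w v
    have hsum : |∑ y, c (p w) y| ≤ Fintype.card Y := by
      simpa using abs_sum_le_sum_abs (fun y => c (p w) y) univ |>.trans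
        (sum_le_card_nsmul _ _ 1 fun y _ => abs_le.2 (hc (p w) y))
    have hmean : |(Fintype.card Y : ℝ)⁻¹ * ∑ y, c (p w) y| ≤ 1 := by
      rw [abs_mul, abs_inv, Nat.abs_cast, inv_mul_le_one₀ hY]
      exact hsum
    obtain ⟨hlo, hhi⟩ := hc (p w) v
    constructor <;> linarith [abs_le.1 hmean]
  have hmean : ∀ w, ∑ v, g w v = 0 := by
    intro w
    simp only [g, sum_sub_distrib, sum_const, card_univ, nsmul_eq_mul, ← mul_assoc,
      mul_inv_cancel₀ hY.ne', one_mul, sub_self]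
  calc (#{f : W → Y | δ < ∑ r, ∑ y, c r y * deviation p f r y} : ℝ)
      ≤ #{f : W → Y | Fintype.card W * δ ≤ ∑ w, g w (f w)} := by
        refine Nat.cast_le.2 (card_le_card (monotone_filter_right _ fun f _ hf => ?_))
        rw [sum_mul_deviation] at hf
        rcases (Nat.cast_nonneg (Fintype.card W) : (0 : ℝ) ≤ _).eq_or_lt with hW | hW
        · rw [← hW, inv_zero, zero_mul] at hf
          linarith
        · exact ((lt_inv_mul_iff₀ hW).1 hf).le
    _ ≤ Real.exp (-2 * Fintype.card W * δ ^ 2 / (2 - -2) ^ 2) * Fintype.card Y ^ Fintype.card W :=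
        card_sum_ge_le_of_mem_Icc g hg hmean hδ
    _ = _ := by ring_nf

lemma card_lt_statDist_le [DecidableEq W] [Nonempty Y] (p : W → R) {ε : ℝ} (hε : 0 ≤ ε) :
    (#{f : W → Y | ε < statDist p f} : ℝ) ≤
      3 ^ (Fintype.card R * Fintype.card Y) * Real.exp (-(Fintype.card W * ε ^ 2 / 2)) *
        Fintype.card Y ^ Fintype.card W := by
  have hcover : ({f : W → Y | ε < statDist p f} : Finset _) ⊆
      (univ : Finset (R → Y → SignType)).biUnion
        fun c => {f | 2 * ε < ∑ r, ∑ y, (c r y : ℝ) * deviation p f r y} := fun f hf => by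
    simpa using exists_sign_lt_sum_mul_deviation (mem_filter.1 hf).2
  have hsign : ∀ (c : R → Y → SignType) r y, (c r y : ℝ) ∈ Set.Icc (-1) 1 := fun c r y => by
    cases c r y <;> norm_num
  calc (#{f : W → Y | ε < statDist p f} : ℝ)
      ≤ ∑ c : R → Y → SignType,
          (#{f | 2 * ε < ∑ r, ∑ y, (c r y : ℝ) * deviation p f r y} : ℝ) := by
        exact_mod_cast (card_le_card hcover).trans card_biUnion_le
    _ ≤ ∑ _c : R → Y → SignType,
          Real.exp (-(Fintype.card W * (2 * ε) ^ 2 / 8)) * Fintype.card Y ^ Fintype.card W :=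
        sum_le_sum fun c _ => card_lt_sum_mul_deviation_le p _ (hsign c) (by positivity)
    _ = _ := by
        have h3 : Fintype.card SignType = 3 := rfl
        simp only [sum_const, card_univ, Fintype.card_fun, h3, nsmul_eq_mul]
        push_cast
        ring_nf

end Deviation

lemma two_pow_le_of_le_sub_logb {m k : ℕ} {ε c : ℝ} (hε : 0 < ε)
    (hm : (m : ℝ) ≤ k - 2 * Real.logb 2 (1 / ε) - c) :
    (2 : ℝ) ^ m ≤ 2 ^ k * ε ^ 2 / 2 ^ c := by
  rw [← Real.rpow_natCast, ← Real.le_logb_iff_rpow_le one_lt_two (by positivity),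
    Real.logb_div (by positivity) (by positivity), Real.logb_mul (by positivity) (by positivity),
    Real.logb_pow, Real.logb_pow, Real.logb_rpow two_pos (by norm_num),
    Real.logb_self_eq_one one_lt_two]
  rw [one_div, Real.logb_inv] at hm
  push_cast
  linarith

lemma sq_mul_le_of_mul_sqrt_le {n : ℕ} {c ε : ℝ} (hc : 0 ≤ c)
    (h : c * √((n : ℝ) / 2 ^ n) ≤ ε) :
    c ^ 2 * n ≤ 2 ^ n * ε ^ 2 := by
  have hsq := pow_le_pow_left₀ (by positivity) h 2
  rw [mul_pow, Real.sq_sqrt (by positivity), mul_div_assoc', div_le_iff₀ (by positivity)] at hsq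
  linarith

lemma two_pow_mul_three_pow_mul_exp_le {n K : ℕ} {E : ℝ} (hn : n ≤ E / 100) (hK : K ≤ E / 16) :
    2 ^ n * 3 ^ K * Real.exp (-(E / 2)) ≤ (2 : ℝ) ^ (-(E / 2)) := by
  have h3 : (3 : ℝ) ^ K ≤ 2 ^ (2 * K) := by
    rw [pow_mul]; exact pow_le_pow_left₀ (by norm_num) (by norm_num) K
  have hexp : ∀ j : ℕ, (2 : ℝ) ^ j = Real.exp (j * Real.log 2) := fun j => by
    rw [← Real.rpow_natCast, Real.rpow_def_of_pos two_pos, mul_comm]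
  have hlog := Real.log_two_lt_d9
  have hlog' := Real.log_pos one_lt_two
  calc 2 ^ n * 3 ^ K * Real.exp (-(E / 2)) ≤ 2 ^ n * 2 ^ (2 * K) * Real.exp (-(E / 2)) := by
        gcongr
    _ = Real.exp ((n + 2 * K) * Real.log 2 - E / 2) := by
        rw [hexp, hexp, ← Real.exp_add, ← Real.exp_add]; push_cast; ring_nf
    _ ≤ Real.exp (Real.log 2 * -(E / 2)) := by
        gcongr
        nlinarith [mul_le_mul_of_nonneg_right
          (show (n + 2 * K : ℝ) ≤ 0.135 * E by linarith) hlog'.le]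
    _ = (2 : ℝ) ^ (-(E / 2)) := (Real.rpow_def_of_pos two_pos _).symm

lemma one_sub_le_card_filter_div_card {α : Type*} [Fintype α] [Nonempty α] (P : α → Prop)
    [DecidablePred P] {q : ℝ} (h : (#{a | ¬ P a} : ℝ) ≤ q * Fintype.card α) :
    1 - q ≤ #{a | P a} / Fintype.card α := by
  have hsplit : (#{a | P a} : ℝ) + #{a | ¬ P a} = Fintype.card α := by
    exact_mod_cast card_filter_add_card_filter_not (s := univ) P
  rw [le_div_iff₀ (Nat.cast_pos.2 Fintype.card_pos)]
  linarith

lemma deviation_restrict {n m : ℕ} (f : (Fin n → Bool) → (Fin m → Bool)) (L : Finset (Fin n))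
    (r : {i // i ∈ L} → Bool) (y : Fin m → Bool) :
    deviation L.restrict f r y =
      ((Finset.univ.filter fun w : Fin n → Bool =>
          (∀ i : {i // i ∈ L}, w i = r i) ∧ f w = y).card : ℝ) / 2 ^ n
        - ((Finset.univ.filter fun w : Fin n → Bool =>
            (∀ i : {i // i ∈ L}, w i = r i)).card : ℝ) / 2 ^ n * (1 / 2 ^ m) := by
  simp [deviation, funext_iff, Finset.restrict]

lemma card_not_forall_statDist_le (n k m : ℕ) {ε : ℝ} (hε : 0 ≤ ε) :
    (#{f : (Fin n → Bool) → (Fin m → Bool) |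
        ¬ ∀ L : Finset (Fin n), L.card = n - k → statDist L.restrict f ≤ ε} : ℝ) ≤
      n.choose (n - k) * 3 ^ (2 ^ (n - k) * 2 ^ m) * Real.exp (-(2 ^ n * ε ^ 2 / 2)) *
        Fintype.card ((Fin n → Bool) → (Fin m → Bool)) := by
  have hcover : ({f : (Fin n → Bool) → (Fin m → Bool) |
        ¬ ∀ L : Finset (Fin n), L.card = n - k → statDist L.restrict f ≤ ε} : Finset _) ⊆
      (powersetCard (n - k) univ).biUnion fun L => {f | ε < statDist L.restrict f} :=
    fun f hf => by simpa using hf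
  calc _ ≤ ∑ L ∈ powersetCard (n - k) univ,
        (#{f : (Fin n → Bool) → (Fin m → Bool) | ε < statDist L.restrict f} : ℝ) := by
        exact_mod_cast (card_le_card hcover).trans card_biUnion_le
    _ ≤ ∑ L ∈ powersetCard (n - k) (univ : Finset (Fin n)),
        3 ^ (2 ^ (n - k) * 2 ^ m) * Real.exp (-(2 ^ n * ε ^ 2 / 2)) *
          Fintype.card ((Fin n → Bool) → (Fin m → Bool)) := by
        refine sum_le_sum fun L hL => (card_lt_statDist_le L.restrict hε).trans_eq ?_
        simp [mem_powersetCard_univ.1 hL]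
    _ = _ := by
        rw [sum_const, card_powersetCard, card_univ, Fintype.card_fin, nsmul_eq_mul]
        ring

open Classical in
/-- There are constants `c₁, c₂, c₃ > 0` such that for `ε ≥ c₃·√(n/2ⁿ)` and
`m ≤ k - 2log₂(1/ε) - c₁`, a uniformly random `f : {0,1}ⁿ → {0,1}^m` is a static
`(k,ε)`-ERF (for every set `L` of `n-k` coordinates, the joint distribution
`(U_n|_L, f(U_n))` is `ε`-close to `(U_n|_L, U_m)`) with probability at least
`1 - 2^{-c₂·2ⁿ·ε²}`. -/
theorem random_function_is_staticERF :
    ∃ c1 : ℝ, 0 < c1 ∧ ∃ c2 : ℝ, 0 < c2 ∧ ∃ c3 : ℝ, 0 < c3 ∧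
      ∀ (n k m : ℕ) (ε : ℝ), 1 ≤ k → k ≤ n →
        c3 * Real.sqrt ((n : ℝ) / 2 ^ n) ≤ ε →
        (m : ℝ) ≤ k - 2 * Real.logb 2 (1 / ε) - c1 →
        1 - (2 : ℝ) ^ (-(c2 * 2 ^ n * ε ^ 2)) ≤
          ((Finset.univ.filter fun f : (Fin n → Bool) → (Fin m → Bool) =>
              ∀ L : Finset (Fin n), L.card = n - k →
                (1 / 2 : ℝ) * ∑ r : {i // i ∈ L} → Bool, ∑ y : Fin m → Bool,
                    |((Finset.univ.filter fun w : Fin n → Bool =>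
                        (∀ i : {i // i ∈ L}, w i = r i) ∧ f w = y).card : ℝ) / 2 ^ n
                      - ((Finset.univ.filter fun w : Fin n → Bool =>
                          (∀ i : {i // i ∈ L}, w i = r i)).card : ℝ) / 2 ^ n
                        * (1 / 2 ^ m)| ≤ ε).card : ℝ)
            / Fintype.card ((Fin n → Bool) → (Fin m → Bool)) := by
  refine ⟨4, by norm_num, 1 / 2, by norm_num, 10, by norm_num, ?_⟩
  intro n k m ε hk hkn hε hm
  have hn0 : (0 : ℝ) < n := Nat.cast_pos.2 (by omega)
  have hε0 : 0 < ε := (by positivity : 0 < 10 * √((n : ℝ) / 2 ^ n)).trans_le hε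
  have hn : (n : ℝ) ≤ 2 ^ n * ε ^ 2 / 100 := by
    linarith [sq_mul_le_of_mul_sqrt_le (by norm_num) hε]
  have hK : ((2 ^ (n - k) * 2 ^ m : ℕ) : ℝ) ≤ 2 ^ n * ε ^ 2 / 16 := by
    have hm' := two_pow_le_of_le_sub_logb hε0 hm
    rw [show (2 : ℝ) ^ (4 : ℝ) = 16 by norm_num] at hm'
    calc ((2 ^ (n - k) * 2 ^ m : ℕ) : ℝ) ≤ 2 ^ (n - k) * (2 ^ k * ε ^ 2 / 16) := by
          push_cast; gcongr
      _ = 2 ^ n * ε ^ 2 / 16 := by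
          rw [← mul_div_assoc, ← mul_assoc, ← pow_add, Nat.sub_add_cancel hkn]
  simp_rw [← deviation_restrict]
  refine one_sub_le_card_filter_div_card _ ((card_not_forall_statDist_le n k m hε0.le).trans ?_)
  gcongr
  calc (n.choose (n - k) : ℝ) * 3 ^ (2 ^ (n - k) * 2 ^ m) * Real.exp (-(2 ^ n * ε ^ 2 / 2))
      ≤ 2 ^ n * 3 ^ (2 ^ (n - k) * 2 ^ m) * Real.exp (-(2 ^ n * ε ^ 2 / 2)) := by
        gcongr; exact_mod_cast Nat.choose_le_two_pow n (n - k)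
    _ ≤ (2 : ℝ) ^ (-(2 ^ n * ε ^ 2 / 2)) := two_pow_mul_three_pow_mul_exp_le (by linarith) hK
    _ = (2 : ℝ) ^ (-(1 / 2 * 2 ^ n * ε ^ 2)) := by ring_nf
end
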